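/- arXiv:2501.02894 — 8 statements merged into one kernel-verified Lean document; each statement's English description precedes it below -/
import Mathlib

section
/- Let $X_1,\ldots,X_n$ be discrete random variables and let $S_1,\ldots,S_m \subseteq \{1,\ldots,n\}$ be subsets such that each index $i \in \{1,\ldots,n\}$ belongs to at least $k \geq 1$ of the subsets. Then $k \, H(X_1,\ldots,X_n) \leq \sum_{j=1}^m H(X_{S_j})$, where $X_{S_j}$ denotes the subvector of $X^n$ indexed by $S_j$. -/
/-- Shannon entropy of a discrete random variable `X` defined on a finite
probability space with weights `p`. -/
noncomputable def shannonEntropy {Ω β : Type*} [Fintype Ω] [DecidableEq β]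
    (p : Ω → ℝ) (X : Ω → β) : ℝ :=
  ∑ b ∈ Finset.univ.image X,
    Real.negMulLog (∑ ω ∈ Finset.univ.filter (fun ω => X ω = b), p ω)

namespace ShearerAux
open Finset Real

lemma negMulLog_add_le {a b : ℝ} (ha : 0 ≤ a) (hb : 0 ≤ b) :
    negMulLog (a + b) ≤ negMulLog a + negMulLog b := by
  rcases ha.eq_or_lt with h | h
  · simp [← h]
  rcases hb.eq_or_lt with h' | h'
  · simp [← h']
  have h1 : a * log a ≤ a * log (a + b) :=
    mul_le_mul_of_nonneg_left (Real.log_le_log h (by linarith)) ha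
  have h2 : b * log b ≤ b * log (a + b) :=
    mul_le_mul_of_nonneg_left (Real.log_le_log h' (by linarith)) hb
  simp only [negMulLog, neg_mul]
  nlinarith [add_mul a b (log (a+b))]

lemma negMulLog_sum_le {β : Type*} {s : Finset β} {g : β → ℝ} (hg : ∀ b ∈ s, 0 ≤ g b) :
    negMulLog (∑ b ∈ s, g b) ≤ ∑ b ∈ s, negMulLog (g b) := by
  induction s using Finset.cons_induction with
  | empty => simp
  | cons a s ha ih =>
    rw [Finset.sum_cons, Finset.sum_cons]
    calc negMulLog (g a + ∑ b ∈ s, g b)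
        ≤ negMulLog (g a) + negMulLog (∑ b ∈ s, g b) :=
          negMulLog_add_le (hg a (mem_cons_self a s))
            (Finset.sum_nonneg fun b hb => hg b (mem_cons_of_mem hb))
      _ ≤ negMulLog (g a) + ∑ b ∈ s, negMulLog (g b) := by
          gcongr
          exact ih fun b hb => hg b (mem_cons_of_mem hb)

variable {Ω : Type*} [Fintype Ω] {β γ δ : Type*} [DecidableEq β] [DecidableEq γ] [DecidableEq δ]

noncomputable def prb (p : Ω → ℝ) (X : Ω → β) (b : β) : ℝ :=
  ∑ ω ∈ Finset.univ.filter (fun ω => X ω = b), p ω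

omit [DecidableEq γ] [DecidableEq δ] in
lemma shannonEntropy_eq (p : Ω → ℝ) (X : Ω → β) :
    shannonEntropy p X = ∑ b ∈ univ.image X, negMulLog (prb p X b) := rfl

omit [DecidableEq γ] [DecidableEq δ] in
lemma prb_nonneg {p : Ω → ℝ} (hp0 : ∀ ω, 0 ≤ p ω) (X : Ω → β) (b : β) : 0 ≤ prb p X b :=
  Finset.sum_nonneg fun ω _ => hp0 ω

omit [DecidableEq γ] [DecidableEq δ] in
lemma sum_prb (p : Ω → ℝ) (X : Ω → β) : ∑ b ∈ univ.image X, prb p X b = ∑ ω, p ω :=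
  Finset.sum_fiberwise_of_maps_to (fun ω _ => mem_image_of_mem X (mem_univ ω)) p

omit [DecidableEq δ] in
lemma prb_comp (p : Ω → ℝ) (X : Ω → β) (f : β → γ) (c : γ) :
    prb p (fun ω => f (X ω)) c = ∑ b ∈ (univ.image X).filter (fun b => f b = c), prb p X b := by
  rw [prb]
  rw [← Finset.sum_fiberwise_of_maps_to (t := (univ.image X).filter (fun b => f b = c))
    (g := X) (fun ω hω => by
      simp only [mem_filter, mem_univ, true_and] at hω ⊢
      exact ⟨mem_image_of_mem X (mem_univ ω), hω⟩) p]
  refine Finset.sum_congr rfl fun b hb => ?_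
  simp only [mem_filter, mem_univ, true_and] at hb
  rw [prb]
  congr 1
  ext ω
  simp only [mem_filter, mem_univ, true_and]
  constructor
  · rintro ⟨-, h⟩; exact h
  · rintro h; exact ⟨h ▸ hb.2, h⟩

omit [DecidableEq δ] in
lemma sum_prb_comp_mul (p : Ω → ℝ) (X : Ω → β) (f : β → γ) (G : γ → ℝ) :
    ∑ c ∈ univ.image (fun ω => f (X ω)), prb p (fun ω => f (X ω)) c * G c
      = ∑ b ∈ univ.image X, prb p X b * G (f b) := by
  have himg : univ.image (fun ω => f (X ω)) = (univ.image X).image f := by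
    rw [Finset.image_image]; rfl
  rw [himg]
  rw [← Finset.sum_fiberwise_of_maps_to (t := (univ.image X).image f) (g := f)
    (fun b hb => mem_image_of_mem f hb) (fun b => prb p X b * G (f b))]
  refine Finset.sum_congr rfl fun c hc => ?_
  rw [prb_comp, Finset.sum_mul]
  refine Finset.sum_congr rfl fun b hb => ?_
  simp only [mem_filter] at hb
  rw [hb.2]

omit [DecidableEq δ] in
lemma H_comp_inj (p : Ω → ℝ) (X : Ω → β) (f : β → γ)
    (hf : ∀ ω ω', f (X ω) = f (X ω') → X ω = X ω') :
    shannonEntropy p (fun ω => f (X ω)) = shannonEntropy p X := by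
  unfold shannonEntropy
  have himg : (univ.image fun ω => f (X ω)) = (univ.image X).image f := by
    rw [Finset.image_image]; rfl
  have hinj : ∀ b ∈ univ.image X, ∀ b' ∈ univ.image X, f b = f b' → b = b' := by
    intro b hb b' hb' hbb
    obtain ⟨ω, -, hω⟩ := Finset.mem_image.mp hb
    obtain ⟨ω', -, hω'⟩ := Finset.mem_image.mp hb'
    subst hω; subst hω'
    exact hf ω ω' hbb
  rw [himg, Finset.sum_image hinj]
  refine Finset.sum_congr rfl fun b hb => ?_
  obtain ⟨ω0, -, hω0⟩ := Finset.mem_image.mp hb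
  congr 1
  refine Finset.sum_congr ?_ fun _ _ => rfl
  ext ω
  simp only [mem_filter, mem_univ, true_and]
  subst hω0
  exact ⟨fun hx => hf ω ω0 hx, fun hx => by rw [hx]⟩

omit [DecidableEq δ] in
lemma H_congr (p : Ω → ℝ) (X : Ω → β) (Y : Ω → γ)
    (h : ∀ ω ω', X ω = X ω' ↔ Y ω = Y ω') :
    shannonEntropy p X = shannonEntropy p Y := by
  classical
  have e1 : shannonEntropy p (fun ω => ({ω' | X ω' = X ω} : Set Ω)) = shannonEntropy p X := by
    refine H_comp_inj p X (fun b => {ω' | X ω' = b}) fun ω ω' hff => ?_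
    have h2 : ({ω'' | X ω'' = X ω} : Set Ω) = {ω'' | X ω'' = X ω'} := hff
    have hmem : ω' ∈ ({ω'' | X ω'' = X ω'} : Set Ω) := rfl
    rw [← h2] at hmem
    exact hmem.symm
  have e2 : shannonEntropy p (fun ω => ({ω' | Y ω' = Y ω} : Set Ω)) = shannonEntropy p Y := by
    refine H_comp_inj p Y (fun b => {ω' | Y ω' = b}) fun ω ω' hff => ?_
    have h2 : ({ω'' | Y ω'' = Y ω} : Set Ω) = {ω'' | Y ω'' = Y ω'} := hff
    have hmem : ω' ∈ ({ω'' | Y ω'' = Y ω'} : Set Ω) := rfl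
    rw [← h2] at hmem
    exact hmem.symm
  rw [← e1, ← e2]
  have : (fun ω => ({ω' | X ω' = X ω} : Set Ω)) = fun ω => ({ω' | Y ω' = Y ω} : Set Ω) := by
    funext ω
    ext ω'
    exact h ω' ω
  rw [this]

omit [DecidableEq δ] in
lemma H_comp_le {p : Ω → ℝ} (hp0 : ∀ ω, 0 ≤ p ω) (X : Ω → β) (f : β → γ) :
    shannonEntropy p (fun ω => f (X ω)) ≤ shannonEntropy p X := by
  rw [shannonEntropy_eq, shannonEntropy_eq]
  calc ∑ c ∈ univ.image (fun ω => f (X ω)), negMulLog (prb p (fun ω => f (X ω)) c)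
      ≤ ∑ c ∈ univ.image (fun ω => f (X ω)),
          ∑ b ∈ (univ.image X).filter (fun b => f b = c), negMulLog (prb p X b) := by
        refine Finset.sum_le_sum fun c _ => ?_
        rw [prb_comp]
        exact negMulLog_sum_le fun b _ => prb_nonneg hp0 X b
    _ = ∑ b ∈ univ.image X, negMulLog (prb p X b) :=
        Finset.sum_fiberwise_of_maps_to
          (fun b hb => by
            obtain ⟨ω, -, hω⟩ := Finset.mem_image.mp hb
            exact Finset.mem_image.mpr ⟨ω, mem_univ ω, by rw [hω]⟩)
          (fun b => negMulLog (prb p X b))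

def π13 {β γ δ : Type*} : β × γ × δ → β × δ := fun t => (t.1, t.2.2)
def π23 {β γ δ : Type*} : β × γ × δ → γ × δ := fun t => (t.2.1, t.2.2)
def π3 {β γ δ : Type*} : β × γ × δ → δ := fun t => t.2.2

omit [DecidableEq δ] in
lemma prb_le_comp {p : Ω → ℝ} (hp0 : ∀ ω, 0 ≤ p ω) (W : Ω → β) (f : β → γ) {t : β}
    (ht : t ∈ univ.image W) : prb p W t ≤ prb p (fun ω => f (W ω)) (f t) := by
  rw [prb_comp p W f (f t)]
  exact Finset.single_le_sum (fun b _ => prb_nonneg hp0 W b) (mem_filter.mpr ⟨ht, rfl⟩)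

omit [DecidableEq δ] in
lemma H_eq_neg_sum (p : Ω → ℝ) (W : Ω → β) (f : β → γ) :
    shannonEntropy p (fun ω => f (W ω))
      = - ∑ t ∈ univ.image W, prb p W t * log (prb p (fun ω => f (W ω)) (f t)) := by
  rw [shannonEntropy_eq, ← sum_prb_comp_mul p W f (fun u => log (prb p (fun ω => f (W ω)) u))]
  simp [negMulLog, neg_mul, Finset.sum_neg_distrib]

omit [DecidableEq γ] [DecidableEq δ] in
lemma H_eq_neg_sum' (p : Ω → ℝ) (W : Ω → β) :
    shannonEntropy p W = - ∑ t ∈ univ.image W, prb p W t * log (prb p W t) := by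
  rw [shannonEntropy_eq]
  simp [negMulLog, neg_mul, Finset.sum_neg_distrib]

lemma submod {p : Ω → ℝ} (hp0 : ∀ ω, 0 ≤ p ω) (hp1 : ∑ ω, p ω = 1) (W : Ω → β × γ × δ) :
    shannonEntropy p W + shannonEntropy p (fun ω => π3 (W ω))
      ≤ shannonEntropy p (fun ω => π13 (W ω)) + shannonEntropy p (fun ω => π23 (W ω)) := by
  rw [H_eq_neg_sum' p W, H_eq_neg_sum p W π3, H_eq_neg_sum p W π13, H_eq_neg_sum p W π23]
  set A := univ.image W with hA
  set a := prb p W with ha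
  set xz := prb p (fun ω => π13 (W ω)) with hxz
  set yz := prb p (fun ω => π23 (W ω)) with hyz
  set z := prb p (fun ω => π3 (W ω)) with hz
  -- abbreviation for the "independent coupling" mass
  set q : β × γ × δ → ℝ := fun t => xz (π13 t) * yz (π23 t) / z (π3 t) with hq
  have hsuma : ∑ t ∈ A, a t = 1 := by rw [ha, hA, sum_prb, hp1]
  -- the key pointwise inequality
  have hpoint : ∀ t ∈ A,
      a t * log (xz (π13 t)) + a t * log (yz (π23 t))
        - a t * log (a t) - a t * log (z (π3 t)) ≤ q t - a t := by
    intro t ht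
    have ha0 : 0 ≤ a t := prb_nonneg hp0 W t
    have hxzt : a t ≤ xz (π13 t) := prb_le_comp hp0 W π13 ht
    have hyzt : a t ≤ yz (π23 t) := prb_le_comp hp0 W π23 ht
    have hzt : a t ≤ z (π3 t) := prb_le_comp hp0 W π3 ht
    rcases ha0.eq_or_lt with h0 | h0
    · rw [← h0]
      simp only [zero_mul, mul_zero, sub_zero, add_zero, zero_add, sub_self]
      have : 0 ≤ q t := by
        rw [hq, hxz, hyz, hz]
        exact div_nonneg (mul_nonneg (prb_nonneg hp0 _ _) (prb_nonneg hp0 _ _))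
          (prb_nonneg hp0 _ _)
      linarith [this]
    · have hxp : 0 < xz (π13 t) := lt_of_lt_of_le h0 hxzt
      have hyp : 0 < yz (π23 t) := lt_of_lt_of_le h0 hyzt
      have hzp : 0 < z (π3 t) := lt_of_lt_of_le h0 hzt
      have hqp : 0 < q t := by rw [hq]; positivity
      have hlog : log (xz (π13 t)) + log (yz (π23 t)) - log (a t) - log (z (π3 t))
          = log (q t / a t) := by
        rw [hq]
        rw [Real.log_div (by positivity) (ne_of_gt h0),
            Real.log_div (by positivity) (ne_of_gt hzp),
            Real.log_mul (ne_of_gt hxp) (ne_of_gt hyp)]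
        ring
      have hle : a t * log (q t / a t) ≤ a t * (q t / a t - 1) :=
        mul_le_mul_of_nonneg_left (Real.log_le_sub_one_of_pos (by positivity)) ha0
      have heq : a t * (q t / a t - 1) = q t - a t := by
        field_simp
      calc a t * log (xz (π13 t)) + a t * log (yz (π23 t))
            - a t * log (a t) - a t * log (z (π3 t))
          = a t * (log (xz (π13 t)) + log (yz (π23 t)) - log (a t) - log (z (π3 t))) := by ring
        _ = a t * log (q t / a t) := by rw [hlog]
        _ ≤ a t * (q t / a t - 1) := hle
        _ = q t - a t := heq
  -- ∑ q ≤ 1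
  have hxz0 : ∀ u, 0 ≤ xz u := fun u => hxz ▸ prb_nonneg hp0 _ u
  have hyz0 : ∀ u, 0 ≤ yz u := fun u => hyz ▸ prb_nonneg hp0 _ u
  have hz0 : ∀ u, 0 ≤ z u := fun u => hz ▸ prb_nonneg hp0 _ u
  have hqsum : ∑ t ∈ A, q t ≤ 1 := by
    have hmaps : ∀ t ∈ A, π3 t ∈ univ.image (fun ω => π3 (W ω)) := by
      intro t ht
      obtain ⟨ω, -, hω⟩ := Finset.mem_image.mp ht
      exact Finset.mem_image.mpr ⟨ω, mem_univ ω, by rw [hω]⟩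
    rw [← Finset.sum_fiberwise_of_maps_to hmaps q]
    have hinner : ∀ d ∈ univ.image (fun ω => π3 (W ω)),
        ∑ t ∈ A.filter (fun t => π3 t = d), q t ≤ z d := by
      intro d hd
      by_cases hzd : z d = 0
      · have : ∑ t ∈ A.filter (fun t => π3 t = d), q t = 0 := by
          refine Finset.sum_eq_zero fun t ht => ?_
          show xz (π13 t) * yz (π23 t) / z (π3 t) = 0
          rw [(Finset.mem_filter.mp ht).2, hzd, div_zero]
        rw [this, hzd]
      · have hzp : 0 < z d := lt_of_le_of_ne (hz0 d) (Ne.symm hzd)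
        have hrw : ∑ t ∈ A.filter (fun t => π3 t = d), q t
            = (∑ t ∈ A.filter (fun t => π3 t = d), xz (π13 t) * yz (π23 t)) / z d := by
          rw [Finset.sum_div]
          refine Finset.sum_congr rfl fun t ht => ?_
          show xz (π13 t) * yz (π23 t) / z (π3 t) = xz (π13 t) * yz (π23 t) / z d
          rw [(Finset.mem_filter.mp ht).2]
        rw [hrw, div_le_iff₀ hzp]
        -- bound the numerator
        set Td := A.filter (fun t => π3 t = d) with hTd
        have hd2 : ∀ t ∈ Td, t.2.2 = d := by
          intro t ht
          exact (Finset.mem_filter.mp ht).2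
        have hinj : ∀ t ∈ Td, ∀ t' ∈ Td, (t.1, t.2.1) = (t'.1, t'.2.1) → t = t' := by
          intro t ht t' ht' hE
          have h1 := congrArg Prod.fst hE
          have h2 := congrArg Prod.snd hE
          simp only at h1 h2
          have h3 : t.2.2 = t'.2.2 := by rw [hd2 t ht, hd2 t' ht']
          exact Prod.ext h1 (Prod.ext h2 h3)
        have hN : ∑ t ∈ Td, xz (π13 t) * yz (π23 t)
            = ∑ u ∈ Td.image (fun t => (t.1, t.2.1)), xz (u.1, d) * yz (u.2, d) := by
          rw [Finset.sum_image hinj]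
          refine Finset.sum_congr rfl fun t ht => ?_
          have h3 := hd2 t ht
          show xz (π13 t) * yz (π23 t) = xz (t.1, d) * yz (t.2.1, d)
          rw [π13, π23, h3]
        have hsubBC : Td.image (fun t => (t.1, t.2.1))
            ⊆ (Td.image (fun t => t.1)) ×ˢ (Td.image (fun t => t.2.1)) := by
          intro u hu
          obtain ⟨t, ht, hut⟩ := Finset.mem_image.mp hu
          rw [Finset.mem_product, ← hut]
          exact ⟨Finset.mem_image_of_mem _ ht, Finset.mem_image_of_mem _ ht⟩
        have hBC : ∑ u ∈ Td.image (fun t => (t.1, t.2.1)), xz (u.1, d) * yz (u.2, d)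
            ≤ (∑ b ∈ Td.image (fun t => t.1), xz (b, d))
              * (∑ c ∈ Td.image (fun t => t.2.1), yz (c, d)) := by
          calc ∑ u ∈ Td.image (fun t => (t.1, t.2.1)), xz (u.1, d) * yz (u.2, d)
              ≤ ∑ u ∈ (Td.image (fun t => t.1)) ×ˢ (Td.image (fun t => t.2.1)),
                  xz (u.1, d) * yz (u.2, d) :=
                Finset.sum_le_sum_of_subset_of_nonneg hsubBC
                  (fun u _ _ => mul_nonneg (hxz0 _) (hyz0 _))
            _ = ∑ b ∈ Td.image (fun t => t.1), ∑ c ∈ Td.image (fun t => t.2.1),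
                  xz (b, d) * yz (c, d) := Finset.sum_product _ _ _
            _ = (∑ b ∈ Td.image (fun t => t.1), xz (b, d))
                * (∑ c ∈ Td.image (fun t => t.2.1), yz (c, d)) :=
                (Finset.sum_mul_sum _ _ _ _).symm
        have hB : ∑ b ∈ Td.image (fun t => t.1), xz (b, d) ≤ z d := by
          have hgroup : prb p (fun ω => (fun u : β × δ => u.2) ((fun ω => π13 (W ω)) ω)) d
              = ∑ u ∈ (univ.image (fun ω => π13 (W ω))).filter (fun u => u.2 = d),
                  prb p (fun ω => π13 (W ω)) u := prb_comp p (fun ω => π13 (W ω)) (fun u => u.2) d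
          have hgz : z d = ∑ u ∈ (univ.image (fun ω => π13 (W ω))).filter (fun u => u.2 = d),
              xz u := by
            rw [hz, hxz]
            exact hgroup
          have hstep : ∑ b ∈ Td.image (fun t => t.1), xz (b, d)
              = ∑ u ∈ (Td.image (fun t => t.1)).image (fun b => (b, d)), xz u :=
            (Finset.sum_image (fun b _ b' _ hE => congrArg Prod.fst hE)).symm
          rw [hstep, hgz]
          refine Finset.sum_le_sum_of_subset_of_nonneg ?_ (fun u _ _ => hxz0 u)
          intro u hu
          obtain ⟨b, hb, hub⟩ := Finset.mem_image.mp hu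
          obtain ⟨t, ht, htb⟩ := Finset.mem_image.mp hb
          obtain ⟨ω, -, hω⟩ := Finset.mem_image.mp (Finset.mem_filter.mp ht).1
          refine Finset.mem_filter.mpr ⟨?_, by rw [← hub]⟩
          refine Finset.mem_image.mpr ⟨ω, mem_univ ω, ?_⟩
          rw [← hub, ← htb]
          show π13 (W ω) = (t.1, d)
          rw [hω, π13, hd2 t ht]
        have hC : ∑ c ∈ Td.image (fun t => t.2.1), yz (c, d) ≤ z d := by
          have hgroup : prb p (fun ω => (fun u : γ × δ => u.2) ((fun ω => π23 (W ω)) ω)) d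
              = ∑ u ∈ (univ.image (fun ω => π23 (W ω))).filter (fun u => u.2 = d),
                  prb p (fun ω => π23 (W ω)) u := prb_comp p (fun ω => π23 (W ω)) (fun u => u.2) d
          have hgz : z d = ∑ u ∈ (univ.image (fun ω => π23 (W ω))).filter (fun u => u.2 = d),
              yz u := by
            rw [hz, hyz]
            exact hgroup
          have hstep : ∑ c ∈ Td.image (fun t => t.2.1), yz (c, d)
              = ∑ u ∈ (Td.image (fun t => t.2.1)).image (fun c => (c, d)), yz u :=
            (Finset.sum_image (fun b _ b' _ hE => congrArg Prod.fst hE)).symm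
          rw [hstep, hgz]
          refine Finset.sum_le_sum_of_subset_of_nonneg ?_ (fun u _ _ => hyz0 u)
          intro u hu
          obtain ⟨c, hc, huc⟩ := Finset.mem_image.mp hu
          obtain ⟨t, ht, htc⟩ := Finset.mem_image.mp hc
          obtain ⟨ω, -, hω⟩ := Finset.mem_image.mp (Finset.mem_filter.mp ht).1
          refine Finset.mem_filter.mpr ⟨?_, by rw [← huc]⟩
          refine Finset.mem_image.mpr ⟨ω, mem_univ ω, ?_⟩
          rw [← huc, ← htc]
          show π23 (W ω) = (t.2.1, d)
          rw [hω, π23, hd2 t ht]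
        calc ∑ t ∈ Td, xz (π13 t) * yz (π23 t)
            ≤ (∑ b ∈ Td.image (fun t => t.1), xz (b, d))
              * (∑ c ∈ Td.image (fun t => t.2.1), yz (c, d)) := hN ▸ hBC
          _ ≤ z d * z d := by
              refine mul_le_mul hB hC (Finset.sum_nonneg fun c _ => hyz0 _) (hz0 d)
    calc ∑ d ∈ univ.image (fun ω => π3 (W ω)), ∑ t ∈ A.filter (fun t => π3 t = d), q t
        ≤ ∑ d ∈ univ.image (fun ω => π3 (W ω)), z d := Finset.sum_le_sum hinner
      _ = 1 := by rw [hz, sum_prb, hp1]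
  have main : ∑ t ∈ A, (a t * log (xz (π13 t)) + a t * log (yz (π23 t))
      - a t * log (a t) - a t * log (z (π3 t))) ≤ ∑ t ∈ A, (q t - a t) :=
    Finset.sum_le_sum hpoint
  rw [Finset.sum_sub_distrib] at main
  simp only [Finset.sum_add_distrib, Finset.sum_sub_distrib] at main
  linarith [main, hqsum, hsuma]

omit [DecidableEq γ] [DecidableEq δ] in
lemma H_const {p : Ω → ℝ} (hp1 : ∑ ω, p ω = 1) (Y : Ω → β)
    (hconst : ∀ ω ω', Y ω = Y ω') : shannonEntropy p Y = 0 := by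
  have hΩ : Nonempty Ω := by
    by_contra h
    rw [not_nonempty_iff] at h
    rw [Finset.sum_of_isEmpty] at hp1
    exact one_ne_zero hp1.symm
  obtain ⟨ω0⟩ := hΩ
  have himg : univ.image Y = {Y ω0} := by
    ext c
    simp only [Finset.mem_image, Finset.mem_singleton, mem_univ, true_and]
    exact ⟨fun ⟨ω, hω⟩ => hω ▸ hconst ω ω0, fun hc => ⟨ω0, hc.symm⟩⟩
  rw [shannonEntropy_eq, himg, Finset.sum_singleton]
  have : prb p Y (Y ω0) = 1 := by
    rw [prb, Finset.filter_true_of_mem (fun ω _ => hconst ω ω0), ← hp1]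
  rw [this, negMulLog_one]

section Shearer

variable {Ω : Type*} [Fintype Ω] {n : ℕ} {α : Fin n → Type*} [∀ i, DecidableEq (α i)]

/-- joint entropy of the subvector indexed by `T` -/
noncomputable def hT (X : ∀ i : Fin n, Ω → α i) (p : Ω → ℝ) (T : Finset (Fin n)) : ℝ :=
  shannonEntropy p (fun ω => (fun i : T => X i ω))

variable {X : ∀ i : Fin n, Ω → α i} {p : Ω → ℝ}

lemma pi_eq_iff {T : Finset (Fin n)} {ω ω' : Ω} :
    (fun i : T => X i ω) = (fun i : T => X i ω') ↔ ∀ j ∈ T, X j ω = X j ω' := by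
  rw [funext_iff]
  exact Subtype.forall

lemma hT_empty (hp1 : ∑ ω, p ω = 1) : hT X p (∅ : Finset (Fin n)) = 0 := by
  refine H_const hp1 _ fun ω ω' => ?_
  funext i
  exact absurd i.2 (Finset.notMem_empty _)

lemma hT_mono (hp0 : ∀ ω, 0 ≤ p ω) {A B : Finset (Fin n)} (hAB : A ⊆ B) :
    hT X p A ≤ hT X p B := by
  have h := H_comp_le hp0 (fun ω => (fun i : B => X i ω))
    (fun v (i : A) => v ⟨i.1, hAB i.2⟩)
  exact h

lemma hT_insert (hp0 : ∀ ω, 0 ≤ p ω) (hp1 : ∑ ω, p ω = 1)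
    {A B : Finset (Fin n)} (hAB : A ⊆ B) {i : Fin n} (hiB : i ∉ B) :
    hT X p (insert i B) + hT X p A ≤ hT X p (insert i A) + hT X p B := by
  have hsub := submod hp0 hp1
    (fun ω => ((X i ω, (fun j : (B \ A : Finset (Fin n)) => X j ω), (fun j : A => X j ω)) :
      α i × (∀ j : (B \ A : Finset (Fin n)), α j) × (∀ j : A, α j)))
  have e1 : shannonEntropy p
      (fun ω => ((X i ω, (fun j : (B \ A : Finset (Fin n)) => X j ω), (fun j : A => X j ω)) :
        α i × (∀ j : (B \ A : Finset (Fin n)), α j) × (∀ j : A, α j)))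
      = hT X p (insert i B) := by
    refine H_congr p _ _ fun ω ω' => ?_
    simp only [Prod.mk.injEq, pi_eq_iff]
    constructor
    · rintro ⟨h1, h2, h3⟩ j hj
      rcases Finset.mem_insert.mp hj with rfl | hjB
      · exact h1
      · by_cases hjA : j ∈ A
        · exact h3 j hjA
        · exact h2 j (Finset.mem_sdiff.mpr ⟨hjB, hjA⟩)
    · intro h
      exact ⟨h i (Finset.mem_insert_self i B),
        fun j hj => h j (Finset.mem_insert_of_mem (Finset.mem_sdiff.mp hj).1),
        fun j hj => h j (Finset.mem_insert_of_mem (hAB hj))⟩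
  have e2 : shannonEntropy p
      (fun ω => π3 ((fun ω => ((X i ω, (fun j : (B \ A : Finset (Fin n)) => X j ω),
          (fun j : A => X j ω)) :
        α i × (∀ j : (B \ A : Finset (Fin n)), α j) × (∀ j : A, α j))) ω))
      = hT X p A := rfl
  have e3 : shannonEntropy p
      (fun ω => π13 ((fun ω => ((X i ω, (fun j : (B \ A : Finset (Fin n)) => X j ω),
          (fun j : A => X j ω)) :
        α i × (∀ j : (B \ A : Finset (Fin n)), α j) × (∀ j : A, α j))) ω))
      = hT X p (insert i A) := by
    refine H_congr p _ _ fun ω ω' => ?_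
    simp only [π13, Prod.mk.injEq, pi_eq_iff]
    constructor
    · rintro ⟨h1, h3⟩ j hj
      rcases Finset.mem_insert.mp hj with rfl | hjA
      · exact h1
      · exact h3 j hjA
    · intro h
      exact ⟨h i (Finset.mem_insert_self i A),
        fun j hj => h j (Finset.mem_insert_of_mem hj)⟩
  have e4 : shannonEntropy p
      (fun ω => π23 ((fun ω => ((X i ω, (fun j : (B \ A : Finset (Fin n)) => X j ω),
          (fun j : A => X j ω)) :
        α i × (∀ j : (B \ A : Finset (Fin n)), α j) × (∀ j : A, α j))) ω))
      = hT X p B := by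
    refine H_congr p _ _ fun ω ω' => ?_
    simp only [π23, Prod.mk.injEq, pi_eq_iff]
    constructor
    · rintro ⟨h2, h3⟩ j hj
      by_cases hjA : j ∈ A
      · exact h3 j hjA
      · exact h2 j (Finset.mem_sdiff.mpr ⟨hj, hjA⟩)
    · intro h
      exact ⟨fun j hj => h j (Finset.mem_sdiff.mp hj).1, fun j hj => h j (hAB hj)⟩
  rw [e1, e2, e3, e4] at hsub
  exact hsub

end Shearer
end ShearerAux

/-- **Shearer's lemma.** -/
theorem shearer_lemma {Ω : Type*} [Fintype Ω] {n m k : ℕ} (hk : 1 ≤ k)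
    (α : Fin n → Type*) [∀ i, DecidableEq (α i)]
    (p : Ω → ℝ) (hp0 : ∀ ω, 0 ≤ p ω) (hp1 : ∑ ω, p ω = 1)
    (X : ∀ i : Fin n, Ω → α i)
    (S : Fin m → Finset (Fin n))
    (hS : ∀ i : Fin n, k ≤ (Finset.univ.filter (fun j => i ∈ S j)).card) :
    (k : ℝ) * shannonEntropy p (fun ω => (fun i : Fin n => X i ω)) ≤
      ∑ j : Fin m, shannonEntropy p (fun ω => (fun i : (S j : Finset (Fin n)) => X i ω)) := by
  open ShearerAux Finset in
  -- the `n`-step filtration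
  have hFn : ∀ T : Finset (Fin n), T.filter (fun t : Fin n => (t : ℕ) < n) = T := fun T =>
    Finset.filter_true_of_mem fun t _ => t.isLt
  have hF0 : ∀ T : Finset (Fin n), T.filter (fun t : Fin n => (t : ℕ) < 0) = ∅ := fun T =>
    Finset.filter_false_of_mem fun t _ => Nat.not_lt_zero _
  have htel : ∀ T : Finset (Fin n), hT X p T
      = ∑ iN ∈ Finset.range n, (hT X p (T.filter (fun t : Fin n => (t : ℕ) < iN + 1))
          - hT X p (T.filter (fun t : Fin n => (t : ℕ) < iN))) := by
    intro T
    rw [Finset.sum_range_sub (fun kk => hT X p (T.filter (fun t : Fin n => (t : ℕ) < kk)))]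
    rw [hFn T, hF0 T, hT_empty hp1, sub_zero]
  have hfull : shannonEntropy p (fun ω => (fun i : Fin n => X i ω))
      = hT X p (univ : Finset (Fin n)) := by
    refine H_congr p _ _ fun ω ω' => ?_
    rw [funext_iff, pi_eq_iff]
    exact ⟨fun h j _ => h j, fun h j => h j (mem_univ j)⟩
  -- the per-step inequality
  have hstep : ∀ iN ∈ Finset.range n,
      (k : ℝ) * (hT X p ((univ : Finset (Fin n)).filter (fun t : Fin n => (t : ℕ) < iN + 1))
          - hT X p ((univ : Finset (Fin n)).filter (fun t : Fin n => (t : ℕ) < iN)))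
        ≤ ∑ j : Fin m, (hT X p ((S j).filter (fun t : Fin n => (t : ℕ) < iN + 1))
          - hT X p ((S j).filter (fun t : Fin n => (t : ℕ) < iN))) := by
    intro iN hiN
    have hi : iN < n := Finset.mem_range.mp hiN
    set i : Fin n := ⟨iN, hi⟩ with hidef
    have hival : (i : ℕ) = iN := rfl
    have hset : ∀ T : Finset (Fin n), i ∈ T →
        insert i (T.filter (fun t : Fin n => (t : ℕ) < iN))
          = T.filter (fun t : Fin n => (t : ℕ) < iN + 1) := by
      intro T hiT
      ext t
      simp only [Finset.mem_insert, Finset.mem_filter]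
      constructor
      · rintro (rfl | ⟨h1, h2⟩)
        · exact ⟨hiT, by rw [hival]; exact Nat.lt_succ_self _⟩
        · exact ⟨h1, Nat.lt_succ_of_lt h2⟩
      · rintro ⟨h1, h2⟩
        rcases Nat.lt_succ_iff_lt_or_eq.mp h2 with h | h
        · exact Or.inr ⟨h1, h⟩
        · exact Or.inl (Fin.ext (h.trans hival.symm))
    have hsetnot : ∀ j : Fin m, i ∉ S j →
        (S j).filter (fun t : Fin n => (t : ℕ) < iN + 1) = (S j).filter (fun t : Fin n => (t : ℕ) < iN) := by
      intro j hij
      ext t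
      simp only [Finset.mem_filter]
      constructor
      · rintro ⟨h1, h2⟩
        rcases Nat.lt_succ_iff_lt_or_eq.mp h2 with h | h
        · exact ⟨h1, h⟩
        · exact absurd ((Fin.ext (h.trans hival.symm) : t = i) ▸ h1) hij
      · rintro ⟨h1, h2⟩
        exact ⟨h1, Nat.lt_succ_of_lt h2⟩
    have hDpos : 0 ≤ hT X p ((univ : Finset (Fin n)).filter (fun t : Fin n => (t : ℕ) < iN + 1))
        - hT X p ((univ : Finset (Fin n)).filter (fun t : Fin n => (t : ℕ) < iN)) := by
      rw [sub_nonneg]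
      refine hT_mono hp0 fun t ht => ?_
      rw [Finset.mem_filter] at ht ⊢
      exact ⟨ht.1, Nat.lt_succ_of_lt ht.2⟩
    have hterm : ∀ j : Fin m,
        (if i ∈ S j then
          hT X p ((univ : Finset (Fin n)).filter (fun t : Fin n => (t : ℕ) < iN + 1))
            - hT X p ((univ : Finset (Fin n)).filter (fun t : Fin n => (t : ℕ) < iN))
        else 0)
        ≤ hT X p ((S j).filter (fun t : Fin n => (t : ℕ) < iN + 1))
          - hT X p ((S j).filter (fun t : Fin n => (t : ℕ) < iN)) := by
      intro j
      by_cases hij : i ∈ S j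
      · rw [if_pos hij]
        have hsubAB : (S j).filter (fun t : Fin n => (t : ℕ) < iN)
            ⊆ (univ : Finset (Fin n)).filter (fun t : Fin n => (t : ℕ) < iN) := by
          intro t ht
          rw [Finset.mem_filter] at ht ⊢
          exact ⟨mem_univ t, ht.2⟩
        have hiB : i ∉ (univ : Finset (Fin n)).filter (fun t : Fin n => (t : ℕ) < iN) := by
          rw [Finset.mem_filter, hival]
          simp
        have hins := hT_insert (X := X) hp0 hp1 hsubAB hiB
        rw [hset (univ : Finset (Fin n)) (mem_univ i), hset (S j) hij] at hins
        linarith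
      · rw [if_neg hij, hsetnot j hij, sub_self]
    calc (k : ℝ) * (hT X p ((univ : Finset (Fin n)).filter (fun t : Fin n => (t : ℕ) < iN + 1))
            - hT X p ((univ : Finset (Fin n)).filter (fun t : Fin n => (t : ℕ) < iN)))
        ≤ (((univ.filter (fun j => i ∈ S j)).card : ℕ) : ℝ)
            * (hT X p ((univ : Finset (Fin n)).filter (fun t : Fin n => (t : ℕ) < iN + 1))
            - hT X p ((univ : Finset (Fin n)).filter (fun t : Fin n => (t : ℕ) < iN))) := by
          exact mul_le_mul_of_nonneg_right (Nat.cast_le.mpr (hS i)) hDpos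
      _ = ∑ j ∈ univ.filter (fun j => i ∈ S j),
            (hT X p ((univ : Finset (Fin n)).filter (fun t : Fin n => (t : ℕ) < iN + 1))
            - hT X p ((univ : Finset (Fin n)).filter (fun t : Fin n => (t : ℕ) < iN))) := by
          rw [Finset.sum_const, nsmul_eq_mul]
      _ = ∑ j : Fin m,
            (if i ∈ S j then
              hT X p ((univ : Finset (Fin n)).filter (fun t : Fin n => (t : ℕ) < iN + 1))
                - hT X p ((univ : Finset (Fin n)).filter (fun t : Fin n => (t : ℕ) < iN))
            else 0) := Finset.sum_filter _ _
      _ ≤ ∑ j : Fin m, (hT X p ((S j).filter (fun t : Fin n => (t : ℕ) < iN + 1))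
            - hT X p ((S j).filter (fun t : Fin n => (t : ℕ) < iN))) :=
          Finset.sum_le_sum fun j _ => hterm j
  calc (k : ℝ) * shannonEntropy p (fun ω => (fun i : Fin n => X i ω))
      = (k : ℝ) * hT X p (univ : Finset (Fin n)) := by rw [hfull]
    _ = ∑ iN ∈ Finset.range n,
          (k : ℝ) * (hT X p ((univ : Finset (Fin n)).filter (fun t : Fin n => (t : ℕ) < iN + 1))
          - hT X p ((univ : Finset (Fin n)).filter (fun t : Fin n => (t : ℕ) < iN))) := by
        rw [htel (univ : Finset (Fin n)), Finset.mul_sum]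
    _ ≤ ∑ iN ∈ Finset.range n, ∑ j : Fin m,
          (hT X p ((S j).filter (fun t : Fin n => (t : ℕ) < iN + 1))
          - hT X p ((S j).filter (fun t : Fin n => (t : ℕ) < iN))) := Finset.sum_le_sum hstep
    _ = ∑ j : Fin m, ∑ iN ∈ Finset.range n,
          (hT X p ((S j).filter (fun t : Fin n => (t : ℕ) < iN + 1))
          - hT X p ((S j).filter (fun t : Fin n => (t : ℕ) < iN))) := Finset.sum_comm
    _ = ∑ j : Fin m, shannonEntropy p (fun ω => (fun i : (S j : Finset (Fin n)) => X i ω)) :=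
        Finset.sum_congr rfl fun j _ => (htel (S j)).symm
end

section
/- Let $X_1,\ldots,X_n$ be discrete random variables. Then $(n-1) H(X_1,\ldots,X_n) \leq \sum_{\ell=1}^n H(X_1,\ldots,X_{\ell-1},X_{\ell+1},\ldots,X_n) \leq n \, H(X_1,\ldots,X_n)$. -/
set_option linter.unusedSectionVars false

namespace HanAux

open Finset Real

variable {Ω : Type*} [Fintype Ω]

noncomputable def mass (p : Ω → ℝ) {β : Type*} [DecidableEq β] (X : Ω → β) (ω : Ω) : ℝ :=
  ∑ ω' ∈ Finset.univ.filter (fun ω' => X ω' = X ω), p ω'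

noncomputable def H' (p : Ω → ℝ) {β : Type*} [DecidableEq β] (X : Ω → β) : ℝ :=
  ∑ ω, -(p ω * Real.log (mass p X ω))

variable {p : Ω → ℝ} {β β' γ δ : Type*} [DecidableEq β] [DecidableEq β']
  [DecidableEq γ] [DecidableEq δ]

lemma mass_nonneg (hp0 : ∀ ω, 0 ≤ p ω) (X : Ω → β) (ω : Ω) : 0 ≤ mass p X ω :=
  Finset.sum_nonneg fun ω' _ => hp0 ω'

lemma le_mass (hp0 : ∀ ω, 0 ≤ p ω) (X : Ω → β) (ω : Ω) : p ω ≤ mass p X ω := by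
  refine Finset.single_le_sum (fun ω' _ => hp0 ω') ?_
  simp

lemma mass_le_one (hp0 : ∀ ω, 0 ≤ p ω) (hp1 : ∑ ω, p ω = 1) (X : Ω → β) (ω : Ω) :
    mass p X ω ≤ 1 := by
  rw [← hp1]
  exact Finset.sum_le_sum_of_subset_of_nonneg (Finset.filter_subset _ _)
    (fun i _ _ => hp0 i)

lemma mass_mono (hp0 : ∀ ω, 0 ≤ p ω) {X : Ω → β} {Y : Ω → β'}
    (h : ∀ a b : Ω, X a = X b → Y a = Y b) (ω : Ω) :
    mass p X ω ≤ mass p Y ω := by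
  refine Finset.sum_le_sum_of_subset_of_nonneg ?_ (fun i _ _ => hp0 i)
  intro a ha
  simp only [Finset.mem_filter, Finset.mem_univ, true_and] at ha ⊢
  exact h a ω ha

lemma shannon_eq_H' (X : Ω → β) : shannonEntropy p X = H' p X := by
  rw [H', ← Finset.sum_fiberwise_of_maps_to (g := X) (t := Finset.univ.image X)
      (fun x _ => Finset.mem_image_of_mem X (Finset.mem_univ x))]
  refine Finset.sum_congr rfl fun b hb => ?_
  have h1 : ∀ ω ∈ Finset.univ.filter (fun ω => X ω = b),
      -(p ω * Real.log (mass p X ω)) =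
        p ω * (-Real.log (∑ ω' ∈ Finset.univ.filter (fun ω' => X ω' = b), p ω')) := by
    intro ω hω
    have hXω : X ω = b := (Finset.mem_filter.mp hω).2
    simp [mass, hXω]
  rw [Finset.sum_congr rfl h1, ← Finset.sum_mul, Real.negMulLog]
  ring

lemma H'_congr {X : Ω → β} {Y : Ω → β'}
    (h : ∀ a b : Ω, X a = X b ↔ Y a = Y b) : H' p X = H' p Y := by
  refine Finset.sum_congr rfl fun ω _ => ?_
  have : Finset.univ.filter (fun ω' => X ω' = X ω)
      = Finset.univ.filter (fun ω' => Y ω' = Y ω) := by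
    apply Finset.filter_congr; intro a _; exact h a ω
  rw [mass, mass, this]

lemma H'_mono (hp0 : ∀ ω, 0 ≤ p ω) {X : Ω → β} {Y : Ω → β'}
    (h : ∀ a b : Ω, X a = X b → Y a = Y b) : H' p Y ≤ H' p X := by
  refine Finset.sum_le_sum fun ω _ => ?_
  rcases (hp0 ω).eq_or_lt with h0 | h0
  · simp [← h0]
  · have hx : 0 < mass p X ω := lt_of_lt_of_le h0 (le_mass hp0 X ω)
    have := Real.log_le_log hx (mass_mono hp0 h ω)
    nlinarith

lemma mass_eq_of_eq {X : Ω → β} {a b : Ω} (h : X a = X b) : mass p X a = mass p X b := by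
  simp [mass, h]

lemma submodular (hp0 : ∀ ω, 0 ≤ p ω) (hp1 : ∑ ω, p ω = 1)
    (W : Ω → γ) (Y : Ω → β) (g : β → δ) :
    H' p (fun ω => (W ω, Y ω)) - H' p Y ≤
      H' p (fun ω => (W ω, g (Y ω))) - H' p (fun ω => g (Y ω)) := by
  classical
  set mY : Ω → ℝ := mass p Y with hmY
  set mWY : Ω → ℝ := mass p (fun ω => (W ω, Y ω)) with hmWY
  set mZ : Ω → ℝ := mass p (fun ω => g (Y ω)) with hmZ
  set mWZ : Ω → ℝ := mass p (fun ω => (W ω, g (Y ω))) with hmWZ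
  set s : Finset Ω := Finset.univ.filter (fun ω => 0 < p ω) with hs
  have hmem_s : ∀ ω ∈ s, 0 < p ω := fun ω hω => (Finset.mem_filter.mp hω).2
  set r : Ω → ℝ := fun ω => mY ω * mWZ ω / (mWY ω * mZ ω) with hr
  -- positivity of masses on s
  have hposY : ∀ ω ∈ s, 0 < mY ω := fun ω hω => lt_of_lt_of_le (hmem_s ω hω) (le_mass hp0 _ _)
  have hposWY : ∀ ω ∈ s, 0 < mWY ω := fun ω hω => lt_of_lt_of_le (hmem_s ω hω) (le_mass hp0 _ _)
  have hposZ : ∀ ω ∈ s, 0 < mZ ω := fun ω hω => lt_of_lt_of_le (hmem_s ω hω) (le_mass hp0 _ _)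
  have hposWZ : ∀ ω ∈ s, 0 < mWZ ω := fun ω hω => lt_of_lt_of_le (hmem_s ω hω) (le_mass hp0 _ _)
  have hrpos : ∀ ω ∈ s, 0 < r ω := fun ω hω => by
    have := hposY ω hω; have := hposWY ω hω; have := hposZ ω hω; have := hposWZ ω hω
    positivity
  -- Step 1 : rewrite the difference as a sum over the support
  have key : H' p (fun ω => (W ω, Y ω)) - H' p Y -
      (H' p (fun ω => (W ω, g (Y ω))) - H' p (fun ω => g (Y ω))) =
      ∑ ω ∈ s, p ω * Real.log (r ω) := by
    have h1 : H' p (fun ω => (W ω, Y ω)) - H' p Y -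
        (H' p (fun ω => (W ω, g (Y ω))) - H' p (fun ω => g (Y ω))) =
        ∑ ω, p ω * (Real.log (mY ω) + Real.log (mWZ ω)
          - Real.log (mWY ω) - Real.log (mZ ω)) := by
      unfold H'
      rw [← Finset.sum_sub_distrib, ← Finset.sum_sub_distrib, ← Finset.sum_sub_distrib]
      exact Finset.sum_congr rfl fun ω _ => by ring
    rw [h1, ← Finset.sum_filter_of_ne (p := fun ω => 0 < p ω)]
    · exact Finset.sum_congr rfl fun ω hω => by
        have h2 : Real.log (r ω) = Real.log (mY ω) + Real.log (mWZ ω)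
            - Real.log (mWY ω) - Real.log (mZ ω) := by
          rw [hr]
          rw [Real.log_div (by
            have := hposY ω hω; have := hposWZ ω hω; positivity) (by
            have := hposWY ω hω; have := hposZ ω hω; positivity),
            Real.log_mul (ne_of_gt (hposY ω hω)) (ne_of_gt (hposWZ ω hω)),
            Real.log_mul (ne_of_gt (hposWY ω hω)) (ne_of_gt (hposZ ω hω))]
          ring
        rw [h2]
    · intro ω _ hne
      rcases (hp0 ω).eq_or_lt with h | h
      · exact absurd (by rw [← h]; ring) hne
      · exact h
  -- support sums to 1
  have hws : ∑ ω ∈ s, p ω = 1 := by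
    rw [hs, Finset.sum_filter_of_ne (fun ω _ hne => lt_of_le_of_ne (hp0 ω) (Ne.symm hne))]
    exact hp1
  -- Step 3 : the crucial combinatorial bound  T ≤ 1
  have hT : ∑ ω ∈ s, p ω * r ω ≤ 1 := by
    have expand : ∀ ω ∈ s, p ω * r ω =
        ∑ ω' ∈ Finset.univ.filter (fun ω' => Y ω' = Y ω),
          p ω' * (p ω * mWZ ω / (mWY ω * mZ ω)) := by
      intro ω hω
      rw [← Finset.sum_mul]
      have h3 : (∑ ω' ∈ Finset.univ.filter (fun ω' => Y ω' = Y ω), p ω') = mY ω := rfl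
      rw [h3, hr]
      ring
    rw [Finset.sum_congr rfl expand]
    have hswap : (∑ ω ∈ s, ∑ ω' ∈ Finset.univ.filter (fun ω' => Y ω' = Y ω),
          p ω' * (p ω * mWZ ω / (mWY ω * mZ ω)))
        = ∑ ω' ∈ Finset.univ, ∑ ω ∈ s.filter (fun ω => Y ω = Y ω'),
          p ω' * (p ω * mWZ ω / (mWY ω * mZ ω)) := by
      apply Finset.sum_comm'
      intro x y
      simp only [Finset.mem_filter, Finset.mem_univ, true_and, and_true]
      exact ⟨fun ⟨h1, h2⟩ => ⟨h1, h2.symm⟩, fun ⟨h1, h2⟩ => ⟨h1, h2.symm⟩⟩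
    rw [hswap, ← hp1]
    apply Finset.sum_le_sum
    intro ω' _
    rcases (hp0 ω').eq_or_lt with h0 | h0
    · apply le_of_eq
      have hz : ∀ ω ∈ s.filter (fun ω => Y ω = Y ω'),
          p ω' * (p ω * mWZ ω / (mWY ω * mZ ω)) = 0 := by
        intro ω hω; rw [← h0]; ring
      rw [Finset.sum_congr rfl hz, Finset.sum_const_zero, ← h0]
    · set t := s.filter (fun ω => Y ω = Y ω') with ht
      have hZ' : 0 < mZ ω' := lt_of_lt_of_le h0 (le_mass hp0 _ _)
      have hstep : ∀ ω ∈ t, p ω' * (p ω * mWZ ω / (mWY ω * mZ ω))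
          = p ω' / mZ ω' * (p ω * mWZ ω / mWY ω) := by
        intro ω hω
        have hYω : Y ω = Y ω' := (Finset.mem_filter.mp hω).2
        have h4 : mZ ω = mZ ω' := mass_eq_of_eq (by simp only [hYω])
        rw [← h4]; ring
      rw [Finset.sum_congr rfl hstep, ← Finset.mul_sum]
      have hU : (∑ ω ∈ t, p ω * mWZ ω / mWY ω) ≤ mZ ω' := by
        have hmapsto : ∀ x ∈ t, W x ∈ t.image W := fun x hx => Finset.mem_image_of_mem W hx
        rw [← Finset.sum_fiberwise_of_maps_to hmapsto (fun ω => p ω * mWZ ω / mWY ω)]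
        have hcellbound : ∀ w ∈ t.image W,
            (∑ ω ∈ t.filter (fun ω => W ω = w), p ω * mWZ ω / mWY ω) ≤
              ∑ ω₁ ∈ Finset.univ.filter (fun ω₁ => W ω₁ = w ∧ g (Y ω₁) = g (Y ω')), p ω₁ := by
          intro w hw
          obtain ⟨ω₀, hω₀t, hω₀w⟩ := Finset.mem_image.mp hw
          have hω₀s : ω₀ ∈ s := (Finset.mem_filter.mp hω₀t).1
          have hω₀Y : Y ω₀ = Y ω' := (Finset.mem_filter.mp hω₀t).2
          set M : ℝ := ∑ ω₁ ∈ Finset.univ.filter (fun ω₁ => W ω₁ = w ∧ Y ω₁ = Y ω'), p ω₁ with hM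
          set N : ℝ := ∑ ω₁ ∈ Finset.univ.filter
            (fun ω₁ => W ω₁ = w ∧ g (Y ω₁) = g (Y ω')), p ω₁ with hN
          have hM0 : 0 < M := by
            have h5 : p ω₀ ≤ M := Finset.single_le_sum (fun i _ => hp0 i) (by
              simp [hω₀w, hω₀Y])
            exact lt_of_lt_of_le (hmem_s ω₀ hω₀s) h5
          have hN0 : 0 ≤ N := Finset.sum_nonneg fun i _ => hp0 i
          have hterm : ∀ ω ∈ t.filter (fun ω => W ω = w),
              p ω * mWZ ω / mWY ω = p ω * (N / M) := by
            intro ω hω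
            obtain ⟨hωt, hωw⟩ := Finset.mem_filter.mp hω
            have hωY : Y ω = Y ω' := (Finset.mem_filter.mp hωt).2
            have hWY : mWY ω = M := by
              rw [hmWY, hM]; unfold mass
              apply Finset.sum_congr _ (fun _ _ => rfl)
              apply Finset.filter_congr; intro a _
              simp [Prod.ext_iff, hωw, hωY]
            have hWZ : mWZ ω = N := by
              rw [hmWZ, hN]; unfold mass
              apply Finset.sum_congr _ (fun _ _ => rfl)
              apply Finset.filter_congr; intro a _
              simp [Prod.ext_iff, hωw, hωY]
            rw [hWY, hWZ]; ring
          rw [Finset.sum_congr rfl hterm, ← Finset.sum_mul]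
          have hsub : ∑ ω ∈ t.filter (fun ω => W ω = w), p ω ≤ M := by
            apply Finset.sum_le_sum_of_subset_of_nonneg _ (fun i _ _ => hp0 i)
            intro a ha
            obtain ⟨hat, haw⟩ := Finset.mem_filter.mp ha
            have h6 : Y a = Y ω' := (Finset.mem_filter.mp hat).2
            simp [haw, h6]
          calc (∑ ω ∈ t.filter (fun ω => W ω = w), p ω) * (N / M) ≤ M * (N / M) :=
                mul_le_mul_of_nonneg_right hsub (by positivity)
            _ = N := by field_simp
        refine le_trans (Finset.sum_le_sum hcellbound) ?_
        set I := t.image W with hI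
        set B := Finset.univ.filter (fun ω₁ => g (Y ω₁) = g (Y ω') ∧ W ω₁ ∈ I) with hB
        have hfib := Finset.sum_fiberwise_of_maps_to (g := W) (s := B) (t := I)
          (fun x hx => (Finset.mem_filter.mp hx).2.2) p
        have heq : ∀ w ∈ I, (∑ ω₁ ∈ Finset.univ.filter
              (fun ω₁ => W ω₁ = w ∧ g (Y ω₁) = g (Y ω')), p ω₁)
            = ∑ ω₁ ∈ B.filter (fun ω₁ => W ω₁ = w), p ω₁ := by
          intro w hw
          apply Finset.sum_congr _ (fun _ _ => rfl)
          ext a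
          simp only [hB, Finset.mem_filter, Finset.mem_univ, true_and]
          constructor
          · rintro ⟨h1, h2⟩; exact ⟨⟨h2, h1 ▸ hw⟩, h1⟩
          · rintro ⟨⟨h1, _⟩, h2⟩; exact ⟨h2, h1⟩
        rw [Finset.sum_congr rfl heq, hfib]
        rw [hmZ]; unfold mass
        apply Finset.sum_le_sum_of_subset_of_nonneg _ (fun i _ _ => hp0 i)
        intro a ha
        simp only [hB, Finset.mem_filter, Finset.mem_univ, true_and] at ha ⊢
        exact ha.1
      calc p ω' / mZ ω' * (∑ ω ∈ t, p ω * mWZ ω / mWY ω) ≤ p ω' / mZ ω' * mZ ω' :=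
            mul_le_mul_of_nonneg_left hU (by positivity)
        _ = p ω' := div_mul_cancel₀ _ (ne_of_gt hZ')
  -- Step 2 : Jensen
  have jensen : ∑ ω ∈ s, p ω * Real.log (r ω) ≤ Real.log (∑ ω ∈ s, p ω * r ω) := by
    have := (strictConcaveOn_log_Ioi.concaveOn).le_map_sum
      (w := p) (p := r) (t := s) (fun ω _ => hp0 ω) hws (fun ω hω => hrpos ω hω)
    simpa [smul_eq_mul] using this
  have hlog : Real.log (∑ ω ∈ s, p ω * r ω) ≤ 0 :=
    Real.log_nonpos (Finset.sum_nonneg fun ω hω => by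
      have := hrpos ω hω; have := hmem_s ω hω; positivity) hT
  linarith [key ▸ (jensen.trans hlog)]


section Main

variable {n : ℕ} {α : Fin n → Type*} [∀ i, DecidableEq (α i)] (X : ∀ i : Fin n, Ω → α i)

def J (s : Finset (Fin n)) : Ω → ((i : Fin n) → Option (α i)) :=
  fun ω i => if i ∈ s then some (X i ω) else none

lemma J_eq_iff {s : Finset (Fin n)} {a b : Ω} :
    J X s a = J X s b ↔ ∀ i ∈ s, X i a = X i b := by
  constructor
  · intro h i hi
    have := congrFun h i
    simpa [J, hi] using this
  · intro h
    funext i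
    by_cases hi : i ∈ s
    · simp [J, hi, h i hi]
    · simp [J, hi]

lemma H'_J_empty (hp1 : ∑ ω, p ω = 1) : H' p (J X ∅) = 0 := by
  unfold H'
  have hm : ∀ ω : Ω, mass p (J X ∅) ω = 1 := by
    intro ω
    unfold mass
    rw [Finset.filter_true_of_mem (fun ω' _ => funext fun i => by simp [J]), hp1]
  simp [hm]

end Main

end HanAux

open HanAux in
/-- **Han's inequality.** -/
theorem han_inequality {Ω : Type*} [Fintype Ω] {n : ℕ}
    (α : Fin n → Type*) [∀ i, DecidableEq (α i)]
    (p : Ω → ℝ) (hp0 : ∀ ω, 0 ≤ p ω) (hp1 : ∑ ω, p ω = 1)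
    (X : ∀ i : Fin n, Ω → α i) :
    ((n : ℝ) - 1) * shannonEntropy p (fun ω => (fun i : Fin n => X i ω)) ≤
        ∑ ℓ : Fin n, shannonEntropy p
          (fun ω => (fun i : (Finset.univ.erase ℓ : Finset (Fin n)) => X i ω)) ∧
      ∑ ℓ : Fin n, shannonEntropy p
          (fun ω => (fun i : (Finset.univ.erase ℓ : Finset (Fin n)) => X i ω)) ≤
        (n : ℝ) * shannonEntropy p (fun ω => (fun i : Fin n => X i ω)) := by
  classical
  have hfull : shannonEntropy p (fun ω => (fun i : Fin n => X i ω))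
      = H' p (J X Finset.univ) := by
    rw [shannon_eq_H']
    apply H'_congr
    intro a b
    rw [J_eq_iff]
    constructor
    · intro h i _; exact congrFun h i
    · intro h; funext i; exact h i (Finset.mem_univ i)
  have herase : ∀ ℓ : Fin n, shannonEntropy p
      (fun ω => (fun i : (Finset.univ.erase ℓ : Finset (Fin n)) => X i ω))
      = H' p (J X (Finset.univ.erase ℓ)) := by
    intro ℓ
    rw [shannon_eq_H']
    apply H'_congr
    intro a b
    rw [J_eq_iff]
    constructor
    · intro h i hi; exact congrFun h ⟨i, hi⟩
    · intro h; funext i; exact h i.1 i.2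
  have h2 : ∀ ℓ : Fin n, H' p (J X (Finset.univ.erase ℓ)) ≤ H' p (J X Finset.univ) := by
    intro ℓ
    apply H'_mono hp0
    intro a b hab
    rw [J_eq_iff] at hab ⊢
    exact fun i _ => hab i (Finset.mem_univ i)
  set E : ℕ → ℝ := fun k =>
    H' p (J X (Finset.univ.filter (fun i : Fin n => (i : ℕ) < k))) with hE
  have hE0 : E 0 = 0 := by
    have h0 : Finset.univ.filter (fun i : Fin n => (i : ℕ) < 0) = ∅ := by simp
    rw [hE]
    simp only [h0]
    exact H'_J_empty X hp1
  have hEn : E n = H' p (J X Finset.univ) := by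
    have hu : Finset.univ.filter (fun i : Fin n => (i : ℕ) < n) = Finset.univ := by
      apply Finset.filter_true_of_mem; intro i _; exact i.isLt
    rw [hE]
    simp only [hu]
  have hkey : ∀ ℓ : Fin n,
      H' p (J X Finset.univ) - H' p (J X (Finset.univ.erase ℓ))
        ≤ E ((ℓ : ℕ) + 1) - E (ℓ : ℕ) := by
    intro ℓ
    set g : ((i : Fin n) → Option (α i)) → ((i : Fin n) → Option (α i)) :=
      fun f i => if (i : ℕ) < (ℓ : ℕ) then f i else none with hg
    have hsub := submodular hp0 hp1 (X ℓ) (J X (Finset.univ.erase ℓ)) g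
    have hgiff : ∀ a b : Ω, g (J X (Finset.univ.erase ℓ) a) = g (J X (Finset.univ.erase ℓ) b)
        ↔ ∀ i : Fin n, (i : ℕ) < (ℓ : ℕ) → X i a = X i b := by
      intro a b
      rw [funext_iff]
      constructor
      · intro h i hi
        have hne : i ≠ ℓ := fun hc => absurd hi (by rw [hc]; exact lt_irrefl _)
        have hi' : i < ℓ := hi
        have := h i
        simpa [hg, J, hi, hi', hne, Finset.mem_erase] using this
      · intro h i
        by_cases hi : (i : ℕ) < (ℓ : ℕ)
        · have hne : i ≠ ℓ := fun hc => absurd hi (by rw [hc]; exact lt_irrefl _)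
          have hi' : i < ℓ := hi
          simp [hg, J, hi, hi', hne, Finset.mem_erase, h i hi]
        · have hi' : ¬ i < ℓ := hi
          simp [hg, hi, hi']
    have e1 : H' p (fun ω => (X ℓ ω, J X (Finset.univ.erase ℓ) ω))
        = H' p (J X Finset.univ) := by
      apply H'_congr
      intro a b
      rw [Prod.ext_iff, J_eq_iff, J_eq_iff]
      constructor
      · rintro ⟨ha, hb⟩ i _
        by_cases hi : i = ℓ
        · rw [hi]; exact ha
        · exact hb i (by simp [hi])
      · intro h
        exact ⟨h ℓ (Finset.mem_univ ℓ), fun i _ => h i (Finset.mem_univ i)⟩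
    have e2 : H' p (fun ω => g (J X (Finset.univ.erase ℓ) ω)) = E (ℓ : ℕ) := by
      rw [hE]
      apply H'_congr
      intro a b
      rw [J_eq_iff, hgiff]
      simp only [Finset.mem_filter, Finset.mem_univ, true_and]
    have e3 : H' p (fun ω => (X ℓ ω, g (J X (Finset.univ.erase ℓ) ω)))
        = E ((ℓ : ℕ) + 1) := by
      rw [hE]
      apply H'_congr
      intro a b
      rw [Prod.ext_iff, hgiff, J_eq_iff]
      simp only [Finset.mem_filter, Finset.mem_univ, true_and]
      constructor
      · rintro ⟨ha, hb⟩ i hi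
        rcases Nat.lt_succ_iff_lt_or_eq.mp hi with h | h
        · exact hb i h
        · have hiℓ : i = ℓ := Fin.ext h
          rw [hiℓ]; exact ha
      · intro h
        exact ⟨h ℓ (Nat.lt_succ_self _), fun i hi => h i (Nat.lt_succ_of_lt hi)⟩
    rw [e1, e2, e3] at hsub
    exact hsub
  have tele : ∑ ℓ : Fin n, (E ((ℓ : ℕ) + 1) - E (ℓ : ℕ)) = E n - E 0 := by
    rw [Fin.sum_univ_eq_sum_range (fun k => E (k + 1) - E k) n]
    exact Finset.sum_range_sub E n
  have hsum : ∑ ℓ : Fin n,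
      (H' p (J X Finset.univ) - H' p (J X (Finset.univ.erase ℓ))) ≤ E n - E 0 :=
    tele ▸ Finset.sum_le_sum (fun ℓ _ => hkey ℓ)
  rw [Finset.sum_sub_distrib, Finset.sum_const, Finset.card_univ, Fintype.card_fin,
    hE0, hEn, nsmul_eq_mul] at hsum
  constructor
  · rw [hfull]
    simp only [herase]
    linarith
  · simp only [herase, hfull]
    calc ∑ ℓ : Fin n, H' p (J X (Finset.univ.erase ℓ))
        ≤ ∑ _ℓ : Fin n, H' p (J X Finset.univ) := Finset.sum_le_sum (fun ℓ _ => h2 ℓ)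
      _ = (n : ℝ) * H' p (J X Finset.univ) := by
          rw [Finset.sum_const, Finset.card_univ, Fintype.card_fin, nsmul_eq_mul]
end

section
/- Let $\mathscr{F}$ be a finite multiset of subsets of $\{1,\ldots,n\}$ such that each element $i$ is contained in at least $k \geq 1$ members of $\mathscr{F}$, and let $\mathscr{M}$ be a set of subsets of $\{1,\ldots,n\}$. For $S \in \mathscr{F}$ define $\mathrm{trace}_S(\mathscr{M}) = \{A \cap S : A \in \mathscr{M}\}$. Then $|\mathscr{M}|^k \leq \prod_{S \in \mathscr{F}} |\mathrm{trace}_S(\mathscr{M})|$. -/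
open Finset NNReal

/-- Mahler's inequality (superadditivity of the geometric mean) in `ℝ≥0`. -/
lemma mahler_ineq {ι : Type*} (s : Finset ι) (hs : s.Nonempty) (a b : ι → ℝ≥0) :
    (∏ i ∈ s, a i) ^ ((s.card : ℝ)⁻¹) + (∏ i ∈ s, b i) ^ ((s.card : ℝ)⁻¹)
      ≤ (∏ i ∈ s, (a i + b i)) ^ ((s.card : ℝ)⁻¹) := by
  have hn : s.card ≠ 0 := hs.card_pos.ne'
  have hcard : (s.card : ℝ) ≠ 0 := Nat.cast_ne_zero.mpr hn
  by_cases h0 : ∃ i ∈ s, a i + b i = 0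
  · obtain ⟨i, hi, hab⟩ := h0
    rw [Finset.prod_eq_zero hi (add_eq_zero.mp hab).1,
      Finset.prod_eq_zero hi (add_eq_zero.mp hab).2,
      NNReal.zero_rpow (inv_ne_zero hcard)]
    simp
  · push_neg at h0
    have hw : ∑ _i ∈ s, ((s.card : ℝ≥0))⁻¹ = 1 := by
      rw [Finset.sum_const, nsmul_eq_mul, mul_inv_cancel₀ (Nat.cast_ne_zero.mpr hn)]
    have key : ∀ f : ι → ℝ≥0,
        (∏ i ∈ s, (f i / (a i + b i))) ^ ((s.card : ℝ)⁻¹)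
          ≤ ∑ i ∈ s, ((s.card : ℝ≥0))⁻¹ * (f i / (a i + b i)) := by
      intro f
      have hAG := NNReal.geom_mean_le_arith_mean_weighted s
        (fun _ => ((s.card : ℝ≥0))⁻¹) (fun i => f i / (a i + b i)) hw
      simp only [NNReal.coe_inv, NNReal.coe_natCast] at hAG
      rwa [NNReal.finset_prod_rpow] at hAG
    have hsum : (∑ i ∈ s, ((s.card : ℝ≥0))⁻¹ * (a i / (a i + b i)))
        + (∑ i ∈ s, ((s.card : ℝ≥0))⁻¹ * (b i / (a i + b i))) = 1 := by
      rw [← Finset.sum_add_distrib]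
      rw [← hw]
      refine Finset.sum_congr rfl fun i hi => ?_
      rw [← mul_add, ← add_div, div_self (h0 i hi), mul_one]
    have hZ : (∏ i ∈ s, (a i + b i)) ^ ((s.card : ℝ)⁻¹) ≠ 0 := by
      intro h
      rw [NNReal.rpow_eq_zero_iff] at h
      exact absurd h.1 (Finset.prod_ne_zero_iff.mpr h0)
    have h1 := key a
    have h2 := key b
    rw [Finset.prod_div_distrib, NNReal.div_rpow] at h1 h2
    have := add_le_add h1 h2
    rw [hsum, ← add_div, div_le_one (pos_iff_ne_zero.mpr hZ)] at this
    exact this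

lemma le_rpow_of_pow_le {k : ℕ} (hk : k ≠ 0) {x z : ℝ≥0} (h : x ^ k ≤ z) :
    x ≤ z ^ ((k : ℝ)⁻¹) := by
  have h2 := NNReal.rpow_le_rpow h (by positivity : (0:ℝ) ≤ (k:ℝ)⁻¹)
  rwa [← NNReal.rpow_natCast x k, ← NNReal.rpow_mul,
    mul_inv_cancel₀ (Nat.cast_ne_zero.mpr hk), NNReal.rpow_one] at h2

lemma pow_le_of_le_rpow {k : ℕ} (hk : k ≠ 0) {x z : ℝ≥0} (h : x ≤ z ^ ((k : ℝ)⁻¹)) :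
    x ^ k ≤ z := by
  have h2 := pow_le_pow_left₀ zero_le h k
  rwa [← NNReal.rpow_natCast (z ^ ((k:ℝ)⁻¹)) k, ← NNReal.rpow_mul,
    inv_mul_cancel₀ (Nat.cast_ne_zero.mpr hk), NNReal.rpow_one] at h2

variable {α : Type*} [DecidableEq α]

lemma erase_inter_of_mem {v : α} (A : Finset α) (S : Finset α) :
    A.erase v ∩ S = (A ∩ S).erase v := by
  ext x
  simp only [Finset.mem_inter, Finset.mem_erase]
  tauto

lemma trace_card_split (M : Finset (Finset α)) (v : α) {S : Finset α} (hv : v ∈ S) :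
    (M.image (fun A => A ∩ S)).card
      = ((M.filter (fun A => v ∉ A)).image (fun A => A ∩ S)).card
        + (((M.filter (fun A => v ∈ A)).image (fun A => A.erase v)).image
            (fun A => A ∩ S)).card := by
  have himg : M.image (fun A => A ∩ S)
      = (M.filter (fun A => v ∈ A)).image (fun A => A ∩ S)
        ∪ (M.filter (fun A => v ∉ A)).image (fun A => A ∩ S) := by
    conv_lhs => rw [← Finset.filter_union_filter_not_eq (fun A => v ∈ A) M]
    rw [Finset.image_union]
  have hdisj : Disjoint ((M.filter (fun A => v ∈ A)).image (fun A => A ∩ S))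
      ((M.filter (fun A => v ∉ A)).image (fun A => A ∩ S)) := by
    rw [Finset.disjoint_left]
    rintro B hB hB'
    obtain ⟨A, hA, rfl⟩ := Finset.mem_image.mp hB
    obtain ⟨A', hA', hAA⟩ := Finset.mem_image.mp hB'
    have h1 : v ∈ A ∩ S := Finset.mem_inter.mpr ⟨(Finset.mem_filter.mp hA).2, hv⟩
    have h2 : v ∉ A' ∩ S := fun hc => (Finset.mem_filter.mp hA').2 (Finset.mem_inter.mp hc).1
    exact h2 (hAA ▸ h1)
  have hsecond : (((M.filter (fun A => v ∈ A)).image (fun A => A.erase v)).image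
      (fun A => A ∩ S)).card = ((M.filter (fun A => v ∈ A)).image (fun A => A ∩ S)).card := by
    rw [Finset.image_image]
    have : ((M.filter (fun A => v ∈ A)).image (fun A => (A.erase v) ∩ S))
        = ((M.filter (fun A => v ∈ A)).image (fun A => A ∩ S)).image (fun B => B.erase v) := by
      rw [Finset.image_image]
      exact Finset.image_congr (fun A _ => erase_inter_of_mem A S)
    rw [show (fun A => A ∩ S) ∘ (fun A : Finset α => A.erase v) = fun A => (A.erase v) ∩ S from rfl,
      this]
    apply Finset.card_image_of_injOn
    intro B hB B' hB' hBB
    obtain ⟨A, hA, rfl⟩ := Finset.mem_image.mp hB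
    obtain ⟨A', hA', rfl⟩ := Finset.mem_image.mp hB'
    have h1 : v ∈ A ∩ S := Finset.mem_inter.mpr ⟨(Finset.mem_filter.mp hA).2, hv⟩
    have h2 : v ∈ A' ∩ S := Finset.mem_inter.mpr ⟨(Finset.mem_filter.mp hA').2, hv⟩
    rw [← Finset.insert_erase h1, ← Finset.insert_erase h2]
    exact congrArg (insert v) hBB
  rw [himg, Finset.card_union_of_disjoint hdisj, hsecond, add_comm]

lemma step_mem (M : Finset (Finset α)) (v : α) {S : Finset α} (hv : v ∈ S) :
    (((M.filter (fun A => v ∉ A) ∪ (M.filter (fun A => v ∈ A)).image (fun A => A.erase v)).image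
        (fun A => A ∩ S)).card)
      + (((M.filter (fun A => v ∉ A) ∩ (M.filter (fun A => v ∈ A)).image (fun A => A.erase v)).image
        (fun A => A ∩ S)).card)
      ≤ (M.image (fun A => A ∩ S)).card := by
  set M₀ := M.filter (fun A => v ∉ A) with hM₀
  set M₁ := (M.filter (fun A => v ∈ A)).image (fun A => A.erase v) with hM₁
  rw [trace_card_split M v hv]
  calc ((M₀ ∪ M₁).image (fun A => A ∩ S)).card + ((M₀ ∩ M₁).image (fun A => A ∩ S)).card
      ≤ (M₀.image (fun A => A ∩ S) ∪ M₁.image (fun A => A ∩ S)).card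
        + (M₀.image (fun A => A ∩ S) ∩ M₁.image (fun A => A ∩ S)).card := by
        exact add_le_add (le_of_eq (congrArg Finset.card (Finset.image_union _ _)))
          (Finset.card_le_card (Finset.image_inter_subset _ _ _))
    _ = (M₀.image (fun A => A ∩ S)).card + (M₁.image (fun A => A ∩ S)).card :=
        Finset.card_union_add_card_inter _ _

lemma step_not_mem_subset (M : Finset (Finset α)) (v : α) {S : Finset α} (hv : v ∉ S) :
    ((M.filter (fun A => v ∉ A) ∪ (M.filter (fun A => v ∈ A)).image (fun A => A.erase v)).image
        (fun A => A ∩ S)) ⊆ M.image (fun A => A ∩ S) := by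
  intro B hB
  obtain ⟨A, hA, rfl⟩ := Finset.mem_image.mp hB
  rcases Finset.mem_union.mp hA with h | h
  · exact Finset.mem_image_of_mem _ (Finset.mem_filter.mp h).1
  · obtain ⟨A', hA', rfl⟩ := Finset.mem_image.mp h
    have : A'.erase v ∩ S = A' ∩ S := by
      rw [erase_inter_of_mem, Finset.erase_eq_of_notMem]
      exact fun hc => hv (Finset.mem_inter.mp hc).2
    rw [this]
    exact Finset.mem_image_of_mem _ (Finset.mem_filter.mp hA').1

lemma card_split (M : Finset (Finset α)) (v : α) :
    M.card = (M.filter (fun A => v ∉ A) ∪ (M.filter (fun A => v ∈ A)).image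
        (fun A => A.erase v)).card
      + (M.filter (fun A => v ∉ A) ∩ (M.filter (fun A => v ∈ A)).image
        (fun A => A.erase v)).card := by
  rw [Finset.card_union_add_card_inter]
  have h1 : ((M.filter (fun A => v ∈ A)).image (fun A => A.erase v)).card
      = (M.filter (fun A => v ∈ A)).card := by
    apply Finset.card_image_of_injOn
    intro A hA A' hA' h
    rw [← Finset.insert_erase (Finset.mem_filter.mp hA).2,
      ← Finset.insert_erase (Finset.mem_filter.mp hA').2]
    exact congrArg (insert v) h
  rw [h1, add_comm, Finset.card_filter_add_card_filter_not]

theorem shearer_aux {k : ℕ} (hk : 1 ≤ k) (F : Multiset (Finset α)) (V : Finset α) :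
    ∀ M : Finset (Finset α), (∀ A ∈ M, A ⊆ V) →
      (∀ i ∈ V, k ≤ Multiset.card (F.filter (fun S => i ∈ S))) →
      ((M.card : ℝ≥0)) ^ k
        ≤ (F.map (fun S => ((M.image (fun A => A ∩ S)).card : ℝ≥0))).prod := by
  induction V using Finset.induction_on with
  | empty =>
    intro M hM _
    rcases Finset.eq_empty_or_nonempty M with rfl | hMne
    · simp [zero_pow (show k ≠ 0 by omega)]
    · have hM1 : M.card ≤ 1 := by
        apply Finset.card_le_one.mpr
        intro A hA B hB
        rw [Finset.subset_empty.mp (hM A hA), Finset.subset_empty.mp (hM B hB)]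
      calc ((M.card : ℝ≥0)) ^ k ≤ 1 ^ k := by
            exact pow_le_pow_left₀ zero_le (by exact_mod_cast hM1) k
        _ = 1 := one_pow k
        _ ≤ _ := by
            apply Multiset.one_le_prod
            intro x hx
            obtain ⟨S, _, rfl⟩ := Multiset.mem_map.mp hx
            have : 0 < (M.image (fun A => A ∩ S)).card :=
              Finset.card_pos.mpr (hMne.image _)
            exact_mod_cast this
  | @insert v V' hvV' ih =>
    intro M hM hF
    set M₀ := M.filter (fun A => v ∉ A) with hM₀def
    set M₁ := (M.filter (fun A => v ∈ A)).image (fun A => A.erase v) with hM₁def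
    set Mu := M₀ ∪ M₁ with hMudef
    set Mi := M₀ ∩ M₁ with hMidef
    have hMu : ∀ A ∈ Mu, A ⊆ V' := by
      intro A hA
      rcases Finset.mem_union.mp hA with h | h
      · intro x hx
        have hxV := hM A (Finset.mem_filter.mp h).1 hx
        rcases Finset.mem_insert.mp hxV with rfl | hxV'
        · exact absurd hx (Finset.mem_filter.mp h).2
        · exact hxV'
      · obtain ⟨A', hA', rfl⟩ := Finset.mem_image.mp h
        intro x hx
        have hxA' := Finset.mem_of_mem_erase hx
        have hxV := hM A' (Finset.mem_filter.mp hA').1 hxA'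
        rcases Finset.mem_insert.mp hxV with rfl | hxV'
        · exact absurd rfl (Finset.ne_of_mem_erase hx)
        · exact hxV'
    have hMi : ∀ A ∈ Mi, A ⊆ V' := fun A hA =>
      hMu A (Finset.mem_union_left _ (Finset.mem_inter.mp hA).1)
    have hF' : ∀ i ∈ V', k ≤ Multiset.card (F.filter (fun S => i ∈ S)) :=
      fun i hi => hF i (Finset.mem_insert_of_mem hi)
    have ihU := ih Mu hMu hF'
    have ihI := ih Mi hMi hF'
    set F₁ := F.filter (fun S => v ∈ S) with hF₁def
    set F₂ := F.filter (fun S => v ∉ S) with hF₂def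
    have hFsplit : F₁ + F₂ = F := Multiset.filter_add_not _ F
    have hmF₁ : k ≤ Multiset.card F₁ := hF v (Finset.mem_insert_self v V')
    set l := F₁.toList with hldef
    have hlF₁ : (l : Multiset (Finset α)) = F₁ := Multiset.coe_toList F₁
    set m := l.length with hmdef
    have hml : m = Multiset.card F₁ := by rw [← hlF₁]; rfl
    have hkm : k ≤ m := hml ▸ hmF₁
    have hm0 : m ≠ 0 := by omega
    set fU : Finset α → ℝ≥0 := fun S => ((Mu.image (fun A => A ∩ S)).card : ℝ≥0) with hfU
    set fI : Finset α → ℝ≥0 := fun S => ((Mi.image (fun A => A ∩ S)).card : ℝ≥0) with hfI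
    set f : Finset α → ℝ≥0 := fun S => ((M.image (fun A => A ∩ S)).card : ℝ≥0) with hf
    have hprodrep : ∀ g : Finset α → ℝ≥0, (F₁.map g).prod = ∏ i : Fin m, g (l.get i) := by
      intro g
      rw [← hlF₁, Multiset.map_coe, Multiset.prod_coe]
      conv_lhs => rw [← List.ofFn_get l, List.map_ofFn]
      exact List.prod_ofFn
    have hmemF₁ : ∀ i : Fin m, l.get i ∈ F₁ := by
      intro i
      rw [← hlF₁]
      exact Multiset.mem_coe.mpr (List.get_mem l i)
    have hvS : ∀ i : Fin m, v ∈ l.get i := fun i =>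
      (Multiset.mem_filter.mp (hmemF₁ i)).2
    set a : Fin m → ℝ≥0 := fun i => fU (l.get i) with hadef
    set b : Fin m → ℝ≥0 := fun i => fI (l.get i) with hbdef
    set c : Fin m → ℝ≥0 := fun i => f (l.get i) with hcdef
    have hab : ∀ i, a i + b i ≤ c i := by
      intro i
      have h := step_mem M v (hvS i)
      rw [← hM₀def, ← hM₁def, ← hMudef, ← hMidef] at h
      simp only [hadef, hbdef, hcdef, hfU, hfI, hf]
      exact_mod_cast h
    have hmahler := mahler_ineq (Finset.univ : Finset (Fin m))
      ⟨⟨0, Nat.pos_of_ne_zero hm0⟩, Finset.mem_univ _⟩ a b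
    rw [Finset.card_univ, Fintype.card_fin] at hmahler
    have hprodc : (∏ i, (a i + b i)) ≤ ∏ i, c i :=
      Finset.prod_le_prod' (fun i _ => hab i)
    have hF₂U : (F₂.map fU).prod ≤ (F₂.map f).prod := by
      apply Multiset.prod_map_le_prod_map
      intro S hS
      rw [hF₂def] at hS
      have hvnS : v ∉ S := (Multiset.mem_filter.mp hS).2
      have h := Finset.card_le_card (step_not_mem_subset M v hvnS)
      rw [← hM₀def, ← hM₁def, ← hMudef] at h
      simp only [hfU, hf]
      exact_mod_cast h
    have hF₂I : (F₂.map fI).prod ≤ (F₂.map f).prod := by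
      apply Multiset.prod_map_le_prod_map
      intro S hS
      rw [hF₂def] at hS
      have hvnS : v ∉ S := (Multiset.mem_filter.mp hS).2
      have hsub : (M₀ ∩ M₁).image (fun A => A ∩ S) ⊆ M.image (fun A => A ∩ S) :=
        (Finset.image_subset_image Finset.inter_subset_union).trans
          (step_not_mem_subset M v hvnS)
      have h := Finset.card_le_card hsub
      simp only [hfI, hf, hMidef]
      exact_mod_cast h
    set X := ∏ i, a i with hX
    set Y := ∏ i, b i with hY
    set C := ∏ i, c i with hC
    set P := (F₂.map f).prod with hP
    have hPU : (F.map fU).prod = X * (F₂.map fU).prod := by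
      rw [← hFsplit, Multiset.map_add, Multiset.prod_add, hprodrep fU]
    have hPI : (F.map fI).prod = Y * (F₂.map fI).prod := by
      rw [← hFsplit, Multiset.map_add, Multiset.prod_add, hprodrep fI]
    have hPC : (F.map f).prod = C * P := by
      rw [← hFsplit, Multiset.map_add, Multiset.prod_add, hprodrep f]
    have hk0 : k ≠ 0 := by omega
    have hAk : ((Mu.card : ℝ≥0)) ^ k ≤ X * P := by
      refine ihU.trans ?_
      rw [hPU]
      exact mul_le_mul_right hF₂U X
    have hBk : ((Mi.card : ℝ≥0)) ^ k ≤ Y * P := by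
      refine ihI.trans ?_
      rw [hPI]
      exact mul_le_mul_right hF₂I Y
    have hA := le_rpow_of_pow_le hk0 hAk
    have hB := le_rpow_of_pow_le hk0 hBk
    set q : ℝ := (k : ℝ)⁻¹ with hq
    set r : ℝ := (m : ℝ)⁻¹ with hr
    set p : ℝ := (m : ℝ) * q with hpdef
    have hmR : (m : ℝ) ≠ 0 := Nat.cast_ne_zero.mpr hm0
    have hkR : (0 : ℝ) < (k : ℝ) := by exact_mod_cast hk.trans_lt' (by norm_num)
    have hq0 : (0:ℝ) ≤ q := by rw [hq]; positivity
    have hr0 : (0:ℝ) ≤ r := by rw [hr]; positivity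
    have hrp : r * p = q := by
      rw [hpdef, hr, hq]
      field_simp
    have hp1 : (1:ℝ) ≤ p := by
      rw [hpdef, hq, ← div_eq_mul_inv]
      exact (one_le_div hkR).mpr (by exact_mod_cast hkm)
    have hp0 : (0:ℝ) ≤ p := le_trans zero_le_one hp1
    have hmid : X ^ q + Y ^ q ≤ C ^ q := by
      rw [show X ^ q = (X ^ r) ^ p by rw [← NNReal.rpow_mul, hrp],
        show Y ^ q = (Y ^ r) ^ p by rw [← NNReal.rpow_mul, hrp],
        show C ^ q = (C ^ r) ^ p by rw [← NNReal.rpow_mul, hrp]]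
      calc (X ^ r) ^ p + (Y ^ r) ^ p ≤ (X ^ r + Y ^ r) ^ p :=
            NNReal.add_rpow_le_rpow_add _ _ hp1
        _ ≤ (C ^ r) ^ p := by
            apply NNReal.rpow_le_rpow _ hp0
            exact hmahler.trans (NNReal.rpow_le_rpow hprodc hr0)
    have hfinal : (Mu.card : ℝ≥0) + (Mi.card : ℝ≥0) ≤ (C * P) ^ q := by
      calc (Mu.card : ℝ≥0) + (Mi.card : ℝ≥0) ≤ (X*P) ^ q + (Y*P) ^ q := add_le_add hA hB
        _ = (X ^ q + Y ^ q) * P ^ q := by rw [NNReal.mul_rpow, NNReal.mul_rpow, add_mul]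
        _ ≤ C ^ q * P ^ q := mul_le_mul_left hmid _
        _ = (C * P) ^ q := NNReal.mul_rpow.symm
    have hsplit := card_split M v
    rw [← hM₀def, ← hM₁def, ← hMudef, ← hMidef] at hsplit
    have hcard : (M.card : ℝ≥0) = (Mu.card : ℝ≥0) + (Mi.card : ℝ≥0) := by
      exact_mod_cast congrArg (Nat.cast : ℕ → ℝ≥0) hsplit
    rw [hPC, hcard]
    exact pow_le_of_le_rpow hk0 hfinal

/-- **Combinatorial version of Shearer's lemma.** -/
theorem combinatorial_shearer {n k : ℕ} (hk : 1 ≤ k)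
    (F : Multiset (Finset (Fin n))) (M : Finset (Finset (Fin n)))
    (hF : ∀ i : Fin n, k ≤ Multiset.card (F.filter (fun S => i ∈ S))) :
    M.card ^ k ≤ (F.map (fun S => (M.image (fun A => A ∩ S)).card)).prod := by
  have aux := shearer_aux hk F Finset.univ M (fun A _ => A.subset_univ) (fun i _ => hF i)
  refine (Nat.cast_le (α := ℝ≥0)).mp ?_
  rw [Nat.cast_pow, Nat.cast_multiset_prod, Multiset.map_map]
  exact aux
end

section
/- Let $X^n = (X_1,\ldots,X_n)$ be a discrete random vector and let $S$ be a random subset of $\{1,\ldots,n\}$ independent of $X^n$. If there exists $\theta > 0$ such that $\Pr[i \in S] \geq \theta$ for all $i \in \{1,\ldots,n\}$, then $\mathbb{E}_S[H(X_S)] \geq \theta \, H(X^n)$. -/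
namespace ShearerAux

open Finset Real

variable {Ω : Type*} [Fintype Ω] (p : Ω → ℝ)

/-- Probability mass of a value `b` under random variable `X`. -/
noncomputable def pm {β : Type*} [DecidableEq β] (X : Ω → β) (b : β) : ℝ :=
  ∑ ω ∈ Finset.univ.filter (fun ω => X ω = b), p ω

variable {β γ δ : Type*} [DecidableEq β] [DecidableEq γ] [DecidableEq δ]

lemma pm_nonneg (hp0 : ∀ ω, 0 ≤ p ω) (X : Ω → β) (b : β) : 0 ≤ pm p X b :=
  Finset.sum_nonneg fun ω _ => hp0 ω

lemma pm_pos (hp0 : ∀ ω, 0 ≤ p ω) (X : Ω → β) {ω : Ω} (hω : 0 < p ω) :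
    0 < pm p X (X ω) := by
  have hmem : ω ∈ Finset.univ.filter (fun ω' => X ω' = X ω) := by simp
  exact lt_of_lt_of_le hω (Finset.single_le_sum (fun ω' _ => hp0 ω') hmem)

lemma pm_le_comp (hp0 : ∀ ω, 0 ≤ p ω) (X : Ω → β) (f : β → γ) (b : β) :
    pm p X b ≤ pm p (fun ω => f (X ω)) (f b) := by
  apply Finset.sum_le_sum_of_subset_of_nonneg
  · intro ω hω
    simp only [Finset.mem_filter, Finset.mem_univ, true_and] at *
    rw [hω]
  · intro ω _ _; exact hp0 ω

/-- Grouping lemma: a sum over `Ω` of `p ω * φ (X ω)` equals the corresponding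
sum over values. -/
lemma sum_comp (X : Ω → β) (φ : β → ℝ) :
    ∑ b ∈ Finset.univ.image X, pm p X b * φ b = ∑ ω, p ω * φ (X ω) := by
  refine Finset.sum_image' _ (fun ω _ => ?_)
  rw [pm, Finset.sum_mul]
  refine Finset.sum_congr rfl fun ω' hω' => ?_
  rw [(Finset.mem_filter.1 hω').2]

lemma ent_eq (X : Ω → β) :
    shannonEntropy p X = ∑ ω, p ω * (-Real.log (pm p X (X ω))) := by
  rw [shannonEntropy]
  rw [← sum_comp p X (fun b => -Real.log (pm p X b))]
  refine Finset.sum_congr rfl fun b _ => ?_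
  rw [Real.negMulLog]; ring_nf; rfl

/-- Entropy does not increase under deterministic maps. -/
lemma ent_comp_le (hp0 : ∀ ω, 0 ≤ p ω) (X : Ω → β) (f : β → γ) :
    shannonEntropy p (fun ω => f (X ω)) ≤ shannonEntropy p X := by
  rw [ent_eq, ent_eq]
  refine Finset.sum_le_sum fun ω _ => ?_
  rcases eq_or_lt_of_le (hp0 ω) with h | h
  · rw [← h]; simp
  · refine mul_le_mul_of_nonneg_left (neg_le_neg ?_) (le_of_lt h)
    exact Real.log_le_log (pm_pos p hp0 X h) (pm_le_comp p hp0 X f (X ω))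

/-- Entropy is invariant under injective recodings. -/
lemma ent_comp_eq (X : Ω → β) {f : β → γ} (hf : Function.Injective f) :
    shannonEntropy p (fun ω => f (X ω)) = shannonEntropy p X := by
  rw [ent_eq, ent_eq]
  refine Finset.sum_congr rfl fun ω _ => ?_
  have : pm p (fun ω' => f (X ω')) (f (X ω)) = pm p X (X ω) := by
    refine Finset.sum_congr (Finset.filter_congr fun ω' _ => ?_) fun _ _ => rfl
    simp [hf.eq_iff]
  rw [this]


lemma sum_pm_le_sum_filter (hp0 : ∀ ω, 0 ≤ p ω) (X : Ω → β) (t : Finset β)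
    (P : Ω → Prop) [DecidablePred P] (h : ∀ ω, X ω ∈ t → P ω) :
    ∑ b ∈ t, pm p X b ≤ ∑ ω ∈ Finset.univ.filter P, p ω := by
  have key := Finset.sum_fiberwise_of_maps_to
    (s := Finset.univ.filter (fun ω => X ω ∈ t)) (t := t) (g := X)
    (fun ω hω => (Finset.mem_filter.1 hω).2) p
  have e1 : ∑ b ∈ t, pm p X b
      = ∑ b ∈ t, ∑ ω ∈ (Finset.univ.filter (fun ω => X ω ∈ t)).filter (fun ω => X ω = b), p ω := by
    refine Finset.sum_congr rfl fun b hb => ?_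
    rw [pm, Finset.filter_filter]
    refine Finset.sum_congr (Finset.filter_congr fun ω _ => ?_) fun _ _ => rfl
    constructor
    · intro hXb; exact ⟨hXb ▸ hb, hXb⟩
    · exact fun h' => h'.2
  rw [e1, key]
  refine Finset.sum_le_sum_of_subset_of_nonneg ?_ (fun ω _ _ => hp0 ω)
  intro ω hω
  simp only [Finset.mem_filter, Finset.mem_univ, true_and] at *
  exact h ω hω

/-- Submodularity of entropy (conditioning reduces entropy). -/
lemma submodular (hp0 : ∀ ω, 0 ≤ p ω) (hp1 : ∑ ω, p ω = 1)
    (X : Ω → β) (Y : Ω → γ) (Z : Ω → δ) :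
    shannonEntropy p (fun ω => (X ω, Y ω, Z ω)) + shannonEntropy p Y ≤
      shannonEntropy p (fun ω => (X ω, Y ω)) + shannonEntropy p (fun ω => (Y ω, Z ω)) := by
  set W : Ω → β × γ × δ := fun ω => (X ω, Y ω, Z ω) with hW
  set XY : Ω → β × γ := fun ω => (X ω, Y ω) with hXY
  set YZ : Ω → γ × δ := fun ω => (Y ω, Z ω) with hYZ
  set P3 : β × γ × δ → ℝ := pm p W with hP3
  set P12 : β × γ × δ → ℝ := fun v => pm p XY (v.1, v.2.1) with hP12
  set P23 : β × γ × δ → ℝ := fun v => pm p YZ (v.2.1, v.2.2) with hP23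
  set P2 : β × γ × δ → ℝ := fun v => pm p Y v.2.1 with hP2
  set ρ : β × γ × δ → ℝ :=
    fun v => if 0 < P3 v then P12 v * P23 v / (P2 v * P3 v) else 0 with hρ
  -- the main estimate
  have claim2 : ∑ v ∈ (Finset.univ.image W).filter (fun v => 0 < P3 v),
      P12 v * P23 v / P2 v ≤ 1 := by
    set F := (Finset.univ.image W).filter (fun v => 0 < P3 v) with hF
    have maps : ∀ v ∈ F, v.2.1 ∈ F.image (fun v => v.2.1) :=
      fun v hv => Finset.mem_image_of_mem _ hv
    rw [← Finset.sum_fiberwise_of_maps_to maps]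
    set t := F.image (fun v => v.2.1) with ht
    have hpmY : ∀ y ∈ t, 0 < pm p Y y := by
      intro y hy
      obtain ⟨v, hv, rfl⟩ := Finset.mem_image.1 hy
      have h3 : 0 < P3 v := (Finset.mem_filter.1 hv).2
      exact lt_of_lt_of_le h3 (pm_le_comp p hp0 W (fun v => v.2.1) v)
    have inner_le : ∀ y ∈ t,
        ∑ v ∈ F.filter (fun v => v.2.1 = y), P12 v * P23 v / P2 v ≤ pm p Y y := by
      intro y hy
      set G := F.filter (fun v => v.2.1 = y) with hG
      have hGy : ∀ v ∈ G, v.2.1 = y := fun v hv => (Finset.mem_filter.1 hv).2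
      have step1 : ∑ v ∈ G, P12 v * P23 v / P2 v
          = (∑ v ∈ G, P12 v * P23 v) / pm p Y y := by
        rw [Finset.sum_div]
        refine Finset.sum_congr rfl fun v hv => ?_
        exact congrArg (fun z => P12 v * P23 v / pm p Y z) (hGy v hv)
      have step2 : ∑ v ∈ G, P12 v * P23 v ≤ pm p Y y * pm p Y y := by
        set e : β × γ × δ → β × δ := fun v => (v.1, v.2.2) with he
        set g' : β × δ → ℝ := fun w => pm p XY (w.1, y) * pm p YZ (y, w.2) with hg'
        have einj : ∀ v ∈ G, ∀ v' ∈ G, e v = e v' → v = v' := by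
          intro v hv v' hv' hev
          have h1 : v.1 = v'.1 := congrArg (fun w : β × δ => w.1) hev
          have h3 : v.2.2 = v'.2.2 := congrArg (fun w : β × δ => w.2) hev
          have h2 : v.2.1 = v'.2.1 := by rw [hGy v hv, hGy v' hv']
          exact Prod.ext h1 (Prod.ext h2 h3)
        have re : ∑ v ∈ G, P12 v * P23 v = ∑ w ∈ G.image e, g' w := by
          rw [Finset.sum_image einj]
          refine Finset.sum_congr rfl fun v hv => ?_
          simp only [hg', he, hP12, hP23, hGy v hv]
        have hsub : G.image e ⊆ (G.image (fun v => v.1)) ×ˢ (G.image (fun v => v.2.2)) := by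
          intro w hw
          obtain ⟨v, hv, rfl⟩ := Finset.mem_image.1 hw
          exact Finset.mem_product.2 ⟨Finset.mem_image_of_mem _ hv, Finset.mem_image_of_mem _ hv⟩
        have hprod : ∑ w ∈ (G.image (fun v => v.1)) ×ˢ (G.image (fun v => v.2.2)), g' w
            = (∑ a ∈ G.image (fun v => v.1), pm p XY (a, y))
              * (∑ c ∈ G.image (fun v => v.2.2), pm p YZ (y, c)) := by
          rw [Finset.sum_mul_sum, Finset.sum_product]
        have b1 : ∑ a ∈ G.image (fun v => v.1), pm p XY (a, y) ≤ pm p Y y := by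
          have inj : ∀ a ∈ G.image (fun v => v.1), ∀ a' ∈ G.image (fun v => v.1),
              (fun a => ((a, y) : β × γ)) a = (fun a => ((a, y) : β × γ)) a' → a = a' :=
            fun a _ a' _ h => congrArg (fun w : β × γ => w.1) h
          rw [← Finset.sum_image inj]
          refine sum_pm_le_sum_filter p hp0 XY _ (fun ω => Y ω = y) (fun ω hω => ?_)
          obtain ⟨a, _, hao⟩ := Finset.mem_image.1 hω
          exact congrArg (fun w : β × γ => w.2) hao.symm
        have b2 : ∑ c ∈ G.image (fun v => v.2.2), pm p YZ (y, c) ≤ pm p Y y := by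
          have inj : ∀ c ∈ G.image (fun v => v.2.2), ∀ c' ∈ G.image (fun v => v.2.2),
              (fun c => ((y, c) : γ × δ)) c = (fun c => ((y, c) : γ × δ)) c' → c = c' :=
            fun c _ c' _ h => congrArg (fun w : γ × δ => w.2) h
          rw [← Finset.sum_image inj]
          refine sum_pm_le_sum_filter p hp0 YZ _ (fun ω => Y ω = y) (fun ω hω => ?_)
          obtain ⟨c, _, hco⟩ := Finset.mem_image.1 hω
          exact congrArg (fun w : γ × δ => w.1) hco.symm
        calc ∑ v ∈ G, P12 v * P23 v = ∑ w ∈ G.image e, g' w := re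
          _ ≤ ∑ w ∈ (G.image (fun v => v.1)) ×ˢ (G.image (fun v => v.2.2)), g' w := by
              refine Finset.sum_le_sum_of_subset_of_nonneg hsub fun w _ _ => ?_
              exact mul_nonneg (pm_nonneg p hp0 _ _) (pm_nonneg p hp0 _ _)
          _ = _ := hprod
          _ ≤ pm p Y y * pm p Y y := by
              refine mul_le_mul b1 b2 (Finset.sum_nonneg fun c _ => pm_nonneg p hp0 _ _) ?_
              exact pm_nonneg p hp0 _ _
      rw [step1]
      rw [div_le_iff₀ (hpmY y hy)]
      exact step2
    calc ∑ y ∈ t, ∑ v ∈ F.filter (fun v => v.2.1 = y), P12 v * P23 v / P2 v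
        ≤ ∑ y ∈ t, pm p Y y := Finset.sum_le_sum inner_le
      _ ≤ ∑ ω ∈ Finset.univ.filter (fun _ => True), p ω := by
          exact sum_pm_le_sum_filter p hp0 Y t _ (fun ω _ => trivial)
      _ = 1 := by rw [Finset.filter_true_of_mem (fun _ _ => trivial)]; exact hp1
  -- sum of p * ρ ∘ W is at most 1
  have sumρ : ∑ ω, p ω * ρ (W ω) ≤ 1 := by
    rw [← sum_comp p W ρ]
    have : ∀ v ∈ Finset.univ.image W, pm p W v * ρ v
        = if 0 < P3 v then P12 v * P23 v / P2 v else 0 := by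
      intro v hv
      by_cases h : 0 < P3 v
      · rw [if_pos h, hρ]
        simp only [if_pos h]
        have h3 : P3 v ≠ 0 := ne_of_gt h
        have h2 : 0 < P2 v := lt_of_lt_of_le h (pm_le_comp p hp0 W (fun v => v.2.1) v)
        have : pm p W v = P3 v := rfl
        rw [this]
        field_simp
      · rw [if_neg h, hρ]
        simp only [if_neg h, mul_zero]
    rw [Finset.sum_congr rfl this, ← Finset.sum_filter]
    exact claim2
  -- pointwise log inequality
  have pointwise : ∀ ω, p ω * (Real.log (P12 (W ω)) + Real.log (P23 (W ω))
      - Real.log (P2 (W ω)) - Real.log (P3 (W ω))) ≤ p ω * ρ (W ω) - p ω := by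
    intro ω
    rcases eq_or_lt_of_le (hp0 ω) with h | h
    · rw [← h]; simp
    · have h3 : 0 < P3 (W ω) := pm_pos p hp0 W h
      have h12 : 0 < P12 (W ω) := pm_pos p hp0 XY h
      have h23 : 0 < P23 (W ω) := pm_pos p hp0 YZ h
      have h2 : 0 < P2 (W ω) := pm_pos p hp0 Y h
      have hρω : ρ (W ω) = P12 (W ω) * P23 (W ω) / (P2 (W ω) * P3 (W ω)) := if_pos h3
      have hlog : Real.log (P12 (W ω)) + Real.log (P23 (W ω))
          - Real.log (P2 (W ω)) - Real.log (P3 (W ω))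
          = Real.log (P12 (W ω) * P23 (W ω) / (P2 (W ω) * P3 (W ω))) := by
        rw [Real.log_div (by positivity) (by positivity),
          Real.log_mul (ne_of_gt h12) (ne_of_gt h23),
          Real.log_mul (ne_of_gt h2) (ne_of_gt h3)]
        ring
      rw [hlog, hρω]
      have hr : 0 < P12 (W ω) * P23 (W ω) / (P2 (W ω) * P3 (W ω)) := by positivity
      have := Real.log_le_sub_one_of_pos hr
      calc p ω * Real.log (P12 (W ω) * P23 (W ω) / (P2 (W ω) * P3 (W ω)))
          ≤ p ω * (P12 (W ω) * P23 (W ω) / (P2 (W ω) * P3 (W ω)) - 1) :=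
            mul_le_mul_of_nonneg_left this (le_of_lt h)
        _ = p ω * (P12 (W ω) * P23 (W ω) / (P2 (W ω) * P3 (W ω))) - p ω := by ring
  -- key inequality
  have key : ∑ ω, p ω * (Real.log (P12 (W ω)) + Real.log (P23 (W ω))
      - Real.log (P2 (W ω)) - Real.log (P3 (W ω))) ≤ 0 := by
    calc ∑ ω, p ω * (Real.log (P12 (W ω)) + Real.log (P23 (W ω))
          - Real.log (P2 (W ω)) - Real.log (P3 (W ω)))
        ≤ ∑ ω, (p ω * ρ (W ω) - p ω) := Finset.sum_le_sum fun ω _ => pointwise ω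
      _ = (∑ ω, p ω * ρ (W ω)) - 1 := by rw [Finset.sum_sub_distrib, hp1]
      _ ≤ 0 := by linarith
  -- assemble
  have e3 : shannonEntropy p W = ∑ ω, p ω * (-Real.log (P3 (W ω))) := ent_eq p W
  have e2 : shannonEntropy p Y = ∑ ω, p ω * (-Real.log (P2 (W ω))) := ent_eq p Y
  have e12 : shannonEntropy p XY = ∑ ω, p ω * (-Real.log (P12 (W ω))) := ent_eq p XY
  have e23 : shannonEntropy p YZ = ∑ ω, p ω * (-Real.log (P23 (W ω))) := ent_eq p YZ
  have expand : (∑ ω, p ω * (-Real.log (P3 (W ω)))) + (∑ ω, p ω * (-Real.log (P2 (W ω))))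
      - ((∑ ω, p ω * (-Real.log (P12 (W ω)))) + (∑ ω, p ω * (-Real.log (P23 (W ω)))))
      = ∑ ω, p ω * (Real.log (P12 (W ω)) + Real.log (P23 (W ω))
        - Real.log (P2 (W ω)) - Real.log (P3 (W ω))) := by
    rw [← Finset.sum_add_distrib, ← Finset.sum_add_distrib, ← Finset.sum_sub_distrib]
    exact Finset.sum_congr rfl fun ω _ => by ring
  show shannonEntropy p W + shannonEntropy p Y ≤ shannonEntropy p XY + shannonEntropy p YZ
  rw [e3, e2, e12, e23]
  linarith [key, expand]

section Main

variable {n : ℕ} {α : Fin n → Type*} [∀ i, DecidableEq (α i)]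

/-- The random subvector indexed by `S`. -/
def XV (X : ∀ i, Ω → α i) (S : Finset (Fin n)) : Ω → (∀ i : S, α i) :=
  fun ω i => X i ω

/-- Entropy of the subvector. -/
noncomputable def HS (p : Ω → ℝ) (X : ∀ i, Ω → α i) (S : Finset (Fin n)) : ℝ :=
  shannonEntropy p (XV X S)

variable (X : ∀ i, Ω → α i)

lemma ent_subsingleton {β' : Type*} [DecidableEq β'] [Subsingleton β']
    (hp1 : ∑ ω, p ω = 1) (Y : Ω → β') : shannonEntropy p Y = 0 := by
  rcases isEmpty_or_nonempty Ω with h | h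
  · simp [shannonEntropy, Finset.univ_eq_empty]
  · obtain ⟨ω₀⟩ := h
    have himg : Finset.univ.image Y = {Y ω₀} := by
      apply Finset.eq_singleton_iff_unique_mem.2
      refine ⟨Finset.mem_image_of_mem Y (Finset.mem_univ ω₀), fun b hb => ?_⟩
      obtain ⟨ω, _, rfl⟩ := Finset.mem_image.1 hb
      exact Subsingleton.elim _ _
    rw [shannonEntropy, himg, Finset.sum_singleton]
    have : Finset.univ.filter (fun ω => Y ω = Y ω₀) = Finset.univ := by
      refine Finset.filter_true_of_mem fun ω _ => ?_
      exact Subsingleton.elim _ _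
    rw [this, hp1, Real.negMulLog_one]

lemma HS_empty (hp1 : ∑ ω, p ω = 1) : HS p X (∅ : Finset (Fin n)) = 0 :=
  ent_subsingleton p hp1 _

lemma HS_mono (hp0 : ∀ ω, 0 ≤ p ω) {S' S : Finset (Fin n)} (h : S' ⊆ S) :
    HS p X S' ≤ HS p X S := by
  exact ent_comp_le p hp0 (XV X S) (fun (x : ∀ i : S, α i) (i : S') => x ⟨i.1, h i.2⟩)

lemma HS_insert (hp0 : ∀ ω, 0 ≤ p ω) {i : Fin n} {T : Finset (Fin n)} (hiT : i ∉ T) :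
    HS p X (insert i T) = shannonEntropy p (fun ω => (X i ω, XV X T ω)) := by
  set e : (∀ j : (insert i T : Finset (Fin n)), α j) → α i × (∀ j : T, α j) :=
    fun x => (x ⟨i, Finset.mem_insert_self i T⟩,
      fun j => x ⟨j.1, Finset.mem_insert_of_mem j.2⟩) with he
  have einj : Function.Injective e := by
    intro x y h
    funext j
    obtain ⟨jv, hj⟩ := j
    rcases Finset.mem_insert.1 hj with rfl | hjT
    · exact congrArg (fun w : α jv × (∀ j : T, α j) => w.1) h
    · exact congrArg (fun w : α i × (∀ j : T, α j) => w.2 ⟨jv, hjT⟩) h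
  have : (fun ω => (X i ω, XV X T ω)) = fun ω => e (XV X (insert i T) ω) := rfl
  rw [this, HS, ent_comp_eq p _ einj]

lemma HS_pair_eq (hp0 : ∀ ω, 0 ≤ p ω) {β' : Type*} [DecidableEq β'] (A : Ω → β')
    {T U : Finset (Fin n)} (hTU : T ⊆ U) :
    shannonEntropy p (fun ω => (A ω, XV X T ω, XV X (U \ T) ω)) =
      shannonEntropy p (fun ω => (A ω, XV X U ω)) := by
  set g : (∀ j : U, α j) → (∀ j : T, α j) × (∀ j : (U \ T : Finset (Fin n)), α j) :=
    fun x => (fun j => x ⟨j.1, hTU j.2⟩,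
      fun j => x ⟨j.1, (Finset.sdiff_subset) j.2⟩) with hg
  have ginj : Function.Injective g := by
    intro x y h
    funext j
    obtain ⟨jv, hj⟩ := j
    by_cases hjT : jv ∈ T
    · exact congrArg (fun w : (∀ j : T, α j) × (∀ j : (U \ T : Finset (Fin n)), α j) =>
        w.1 ⟨jv, hjT⟩) h
    · have hjd : jv ∈ U \ T := Finset.mem_sdiff.2 ⟨hj, hjT⟩
      exact congrArg (fun w : (∀ j : T, α j) × (∀ j : (U \ T : Finset (Fin n)), α j) =>
        w.2 ⟨jv, hjd⟩) h
  have g'inj : Function.Injective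
      (fun w : β' × (∀ j : U, α j) => (w.1, g w.2)) := by
    intro w w' h
    have h1 : w.1 = w'.1 := congrArg (fun z => z.1) h
    have h2 : g w.2 = g w'.2 := congrArg (fun z => z.2) h
    exact Prod.ext h1 (ginj h2)
  have : (fun ω => (A ω, XV X T ω, XV X (U \ T) ω))
      = fun ω => (fun w : β' × (∀ j : U, α j) => (w.1, g w.2))
          ((fun ω => (A ω, XV X U ω)) ω) := rfl
  rw [this, ent_comp_eq p _ g'inj]

lemma HS_sdiff_eq (hp0 : ∀ ω, 0 ≤ p ω) {T U : Finset (Fin n)} (hTU : T ⊆ U) :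
    shannonEntropy p (fun ω => (XV X T ω, XV X (U \ T) ω)) = HS p X U := by
  set g : (∀ j : U, α j) → (∀ j : T, α j) × (∀ j : (U \ T : Finset (Fin n)), α j) :=
    fun x => (fun j => x ⟨j.1, hTU j.2⟩,
      fun j => x ⟨j.1, (Finset.sdiff_subset) j.2⟩) with hg
  have ginj : Function.Injective g := by
    intro x y h
    funext j
    obtain ⟨jv, hj⟩ := j
    by_cases hjT : jv ∈ T
    · exact congrArg (fun w : (∀ j : T, α j) × (∀ j : (U \ T : Finset (Fin n)), α j) =>
        w.1 ⟨jv, hjT⟩) h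
    · have hjd : jv ∈ U \ T := Finset.mem_sdiff.2 ⟨hj, hjT⟩
      exact congrArg (fun w : (∀ j : T, α j) × (∀ j : (U \ T : Finset (Fin n)), α j) =>
        w.2 ⟨jv, hjd⟩) h
  have : (fun ω => (XV X T ω, XV X (U \ T) ω)) = fun ω => g (XV X U ω) := rfl
  rw [this, ent_comp_eq p _ ginj]
  rfl

/-- Conditioning on more variables decreases conditional entropy. -/
lemma cond_mono (hp0 : ∀ ω, 0 ≤ p ω) (hp1 : ∑ ω, p ω = 1) {β' : Type*} [DecidableEq β']
    (A : Ω → β') {T U : Finset (Fin n)} (hTU : T ⊆ U) :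
    shannonEntropy p (fun ω => (A ω, XV X U ω)) - HS p X U ≤
      shannonEntropy p (fun ω => (A ω, XV X T ω)) - HS p X T := by
  have sub := submodular p hp0 hp1 A (XV X T) (XV X (U \ T))
  rw [HS_pair_eq p X hp0 A hTU, HS_sdiff_eq p X hp0 hTU] at sub
  have : HS p X T = shannonEntropy p (XV X T) := rfl
  linarith [sub]


/-- Truncation of `S` below `k`. -/
def SF (S : Finset (Fin n)) (k : ℕ) : Finset (Fin n) :=
  S.filter (fun j => j.val < k)

lemma SF_zero (S : Finset (Fin n)) : SF S 0 = ∅ := by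
  apply Finset.filter_false_of_mem; intro j _; omega

lemma SF_top (S : Finset (Fin n)) : SF S n = S :=
  Finset.filter_true_of_mem fun j _ => j.isLt

lemma SF_succ_mem {S : Finset (Fin n)} {k : ℕ} {i : Fin n} (hi : i.val = k) (hiS : i ∈ S) :
    SF S (k + 1) = insert i (SF S k) := by
  ext j
  simp only [SF, Finset.mem_filter, Finset.mem_insert]
  constructor
  · rintro ⟨hjS, hjk⟩
    rcases Nat.lt_succ_iff_lt_or_eq.1 hjk with h | h
    · exact Or.inr ⟨hjS, h⟩
    · exact Or.inl (Fin.ext (by omega))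
  · rintro (rfl | ⟨hjS, hjk⟩)
    · exact ⟨hiS, by omega⟩
    · exact ⟨hjS, by omega⟩

lemma SF_succ_not_mem {S : Finset (Fin n)} {k : ℕ} {i : Fin n} (hi : i.val = k)
    (hiS : i ∉ S) : SF S (k + 1) = SF S k := by
  apply Finset.filter_congr
  intro j hjS
  constructor
  · intro hjk
    rcases Nat.lt_succ_iff_lt_or_eq.1 hjk with h | h
    · exact h
    · exact absurd (Fin.ext (show j.val = i.val by omega) ▸ hjS) hiS
  · omega

lemma not_mem_SF_self {S : Finset (Fin n)} {k : ℕ} {i : Fin n} (hi : i.val = k) :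
    i ∉ SF S k := by
  simp only [SF, Finset.mem_filter]
  rintro ⟨-, h⟩; omega

lemma SF_subset {S : Finset (Fin n)} (k : ℕ) : SF S k ⊆ SF (Finset.univ : Finset (Fin n)) k :=
  Finset.filter_subset_filter _ (Finset.subset_univ S)

/-- The chain-rule increments. -/
noncomputable def cc (p : Ω → ℝ) (X : ∀ i, Ω → α i) (i : Fin n) : ℝ :=
  HS p X (SF Finset.univ (i.val + 1)) - HS p X (SF Finset.univ i.val)

lemma cc_nonneg (hp0 : ∀ ω, 0 ≤ p ω) (i : Fin n) : 0 ≤ cc p X i := by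
  have h : SF (Finset.univ : Finset (Fin n)) i.val ⊆ SF Finset.univ (i.val + 1) := by
    intro j hj
    simp only [SF, Finset.mem_filter] at *
    exact ⟨hj.1, by omega⟩
  have := HS_mono p X hp0 h
  rw [cc]; linarith

/-- Per-step bound: the increment for `S` dominates the full-chain increment. -/
lemma step_bound (hp0 : ∀ ω, 0 ≤ p ω) (hp1 : ∑ ω, p ω = 1)
    {S : Finset (Fin n)} {i : Fin n} (hiS : i ∈ S) :
    cc p X i ≤ HS p X (SF S (i.val + 1)) - HS p X (SF S i.val) := by
  have h1 : HS p X (SF S (i.val + 1)) = shannonEntropy p (fun ω => (X i ω, XV X (SF S i.val) ω)) := by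
    rw [SF_succ_mem rfl hiS]
    exact HS_insert p X hp0 (not_mem_SF_self rfl)
  have h2 : HS p X (SF Finset.univ (i.val + 1))
      = shannonEntropy p (fun ω => (X i ω, XV X (SF Finset.univ i.val) ω)) := by
    rw [SF_succ_mem rfl (Finset.mem_univ i)]
    exact HS_insert p X hp0 (not_mem_SF_self rfl)
  have h3 := cond_mono p X hp0 hp1 (X i) (SF_subset (S := S) i.val)
  rw [cc, h1, h2]
  linarith

lemma lower (hp0 : ∀ ω, 0 ≤ p ω) (hp1 : ∑ ω, p ω = 1) (S : Finset (Fin n)) :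
    ∑ i : Fin n, (if i ∈ S then cc p X i else 0) ≤ HS p X S := by
  have tel := Finset.sum_range_sub (fun k => HS p X (SF S k)) n
  rw [SF_top, SF_zero, HS_empty p X hp1, sub_zero] at tel
  set g : ℕ → ℝ := fun k =>
    if h : k < n then (if (⟨k, h⟩ : Fin n) ∈ S then cc p X ⟨k, h⟩ else 0) else 0 with hg
  have hbound : ∀ k ∈ Finset.range n, g k ≤ HS p X (SF S (k + 1)) - HS p X (SF S k) := by
    intro k hk
    have hkn := Finset.mem_range.1 hk
    simp only [hg, dif_pos hkn]
    by_cases hiS : (⟨k, hkn⟩ : Fin n) ∈ S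
    · rw [if_pos hiS]
      exact step_bound p X hp0 hp1 hiS
    · rw [if_neg hiS, SF_succ_not_mem rfl hiS]
      simp
  have hfin : ∑ i : Fin n, (if i ∈ S then cc p X i else 0) = ∑ k ∈ Finset.range n, g k := by
    rw [← Fin.sum_univ_eq_sum_range g n]
    refine Finset.sum_congr rfl fun i _ => ?_
    simp only [hg, dif_pos i.isLt, Fin.eta]
  calc ∑ i : Fin n, (if i ∈ S then cc p X i else 0) = ∑ k ∈ Finset.range n, g k := hfin
    _ ≤ ∑ k ∈ Finset.range n, (HS p X (SF S (k + 1)) - HS p X (SF S k)) :=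
        Finset.sum_le_sum hbound
    _ = HS p X S := tel

end Main

end ShearerAux

/-- **Probabilistic version of Shearer's lemma.** The random subset `S` of
`{1,…,n}` is described by its probability mass function `q` (being independent
of the random vector `X^n`, which lives on the separate probability space `Ω`). -/
theorem probabilistic_shearer {Ω : Type*} [Fintype Ω] {n : ℕ} {θ : ℝ} (hθ : 0 < θ)
    (α : Fin n → Type*) [∀ i, DecidableEq (α i)]
    (p : Ω → ℝ) (hp0 : ∀ ω, 0 ≤ p ω) (hp1 : ∑ ω, p ω = 1)
    (X : ∀ i : Fin n, Ω → α i)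
    (q : Finset (Fin n) → ℝ) (hq0 : ∀ S, 0 ≤ q S) (hq1 : ∑ S : Finset (Fin n), q S = 1)
    (hθS : ∀ i : Fin n, θ ≤ ∑ S ∈ Finset.univ.filter (fun S : Finset (Fin n) => i ∈ S), q S) :
    θ * shannonEntropy p (fun ω => (fun i : Fin n => X i ω)) ≤
      ∑ S : Finset (Fin n),
        q S * shannonEntropy p (fun ω => (fun i : (S : Finset (Fin n)) => X i ω)) := by
  open ShearerAux in
  have hfull : shannonEntropy p (fun ω => (fun i : Fin n => X i ω))
      = HS p X (Finset.univ : Finset (Fin n)) := by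
    have ginj : Function.Injective
        (fun (x : ∀ i : Fin n, α i) (i : (Finset.univ : Finset (Fin n))) => x i.1) := by
      intro x y h
      funext i
      exact congrArg (fun w => w (⟨i, Finset.mem_univ i⟩ : (Finset.univ : Finset (Fin n)))) h
    exact (ent_comp_eq p (fun ω => (fun i : Fin n => X i ω)) ginj).symm
  have chain : ShearerAux.HS p X (Finset.univ : Finset (Fin n)) = ∑ i : Fin n, cc p X i := by
    have tel := Finset.sum_range_sub (fun k => HS p X (SF (Finset.univ : Finset (Fin n)) k)) n
    rw [SF_top, SF_zero, HS_empty p X hp1, sub_zero] at tel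
    rw [← tel, ← Fin.sum_univ_eq_sum_range
      (fun k => HS p X (SF (Finset.univ : Finset (Fin n)) (k + 1))
        - HS p X (SF (Finset.univ : Finset (Fin n)) k)) n]
    rfl
  have swap : ∑ i : Fin n,
      (∑ S ∈ Finset.univ.filter (fun S : Finset (Fin n) => i ∈ S), q S) * cc p X i
      = ∑ S : Finset (Fin n), q S * ∑ i : Fin n, (if i ∈ S then cc p X i else 0) := by
    calc ∑ i : Fin n, (∑ S ∈ Finset.univ.filter (fun S : Finset (Fin n) => i ∈ S), q S) * cc p X i
        = ∑ i : Fin n, ∑ S : Finset (Fin n), (if i ∈ S then q S else 0) * cc p X i := by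
          refine Finset.sum_congr rfl fun i _ => ?_
          rw [Finset.sum_filter, Finset.sum_mul]
      _ = ∑ S : Finset (Fin n), ∑ i : Fin n, (if i ∈ S then q S else 0) * cc p X i :=
          Finset.sum_comm
      _ = ∑ S : Finset (Fin n), q S * ∑ i : Fin n, (if i ∈ S then cc p X i else 0) := by
          refine Finset.sum_congr rfl fun S _ => ?_
          rw [Finset.mul_sum]
          refine Finset.sum_congr rfl fun i _ => ?_
          split_ifs with h
          · ring
          · ring
  calc θ * shannonEntropy p (fun ω => (fun i : Fin n => X i ω))
      = ∑ i : Fin n, θ * cc p X i := by rw [hfull, chain, Finset.mul_sum]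
    _ ≤ ∑ i : Fin n,
        (∑ S ∈ Finset.univ.filter (fun S : Finset (Fin n) => i ∈ S), q S) * cc p X i :=
        Finset.sum_le_sum fun i _ =>
          mul_le_mul_of_nonneg_right (hθS i) (cc_nonneg p X hp0 i)
    _ = ∑ S : Finset (Fin n), q S * ∑ i : Fin n, (if i ∈ S then cc p X i else 0) := swap
    _ ≤ ∑ S : Finset (Fin n),
        q S * shannonEntropy p (fun ω => (fun i : (S : Finset (Fin n)) => X i ω)) :=
        Finset.sum_le_sum fun S _ =>
          mul_le_mul_of_nonneg_left (lower p X hp0 hp1 S) (hq0 S)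
end

section
/- Let $t \geq 2$ and let $\mathcal{G}$ be a family of graphs on the common vertex set $\{1,\ldots,n\}$ such that for every $G_1, G_2 \in \mathcal{G}$, the intersection $G_1 \cap G_2$ contains a clique on $t$ vertices. Then $|\mathcal{G}| \leq 2^{\binom{n}{2}-(t-1)}$. -/
open Finset

namespace KtAux

open scoped NNReal

/-- Mahler's inequality (superadditivity of the geometric mean) in `ℝ≥0`. -/
lemma mahler {ι : Type*} (s : Finset ι) (q : ℕ) (hq : 0 < q) (hs : s.card = q)
    (x y : ι → ℝ≥0) :
    (∏ i ∈ s, x i) ^ ((q : ℝ)⁻¹) + (∏ i ∈ s, y i) ^ ((q : ℝ)⁻¹)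
      ≤ (∏ i ∈ s, (x i + y i)) ^ ((q : ℝ)⁻¹) := by
  have hq' : (q : ℝ) ≠ 0 := Nat.cast_ne_zero.mpr hq.ne'
  have hcne : ((q : ℝ)⁻¹) ≠ 0 := inv_ne_zero hq'
  by_cases hZ : ∏ i ∈ s, (x i + y i) = 0
  · obtain ⟨i, hi, hxy⟩ := Finset.prod_eq_zero_iff.mp hZ
    have hx : x i = 0 := by
      have := (add_eq_zero.mp hxy).1; exact this
    have hy : y i = 0 := (add_eq_zero.mp hxy).2
    rw [Finset.prod_eq_zero hi hx, Finset.prod_eq_zero hi hy, hZ,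
      NNReal.zero_rpow hcne]
    simp
  · have hall : ∀ i ∈ s, x i + y i ≠ 0 := fun i hi h0 => hZ (Finset.prod_eq_zero hi h0)
    have hqnn : ((q : ℝ≥0)) ≠ 0 := Nat.cast_ne_zero.mpr hq.ne'
    have hwsum : ∑ _i ∈ s, ((q : ℝ≥0))⁻¹ = 1 := by
      rw [Finset.sum_const, hs, nsmul_eq_mul]
      exact mul_inv_cancel₀ hqnn
    have hcoe : (((q : ℝ≥0))⁻¹ : ℝ) = (q : ℝ)⁻¹ := by
      push_cast
      rfl
    have hx := NNReal.geom_mean_le_arith_mean_weighted s (fun _ => ((q : ℝ≥0))⁻¹)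
      (fun i => x i / (x i + y i)) hwsum
    have hy := NNReal.geom_mean_le_arith_mean_weighted s (fun _ => ((q : ℝ≥0))⁻¹)
      (fun i => y i / (x i + y i)) hwsum
    simp only [NNReal.coe_inv, NNReal.coe_natCast] at hx hy
    rw [NNReal.finset_prod_rpow, Finset.prod_div_distrib, NNReal.div_rpow] at hx hy
    have hsum : (∑ i ∈ s, ((q : ℝ≥0))⁻¹ * (x i / (x i + y i)))
        + (∑ i ∈ s, ((q : ℝ≥0))⁻¹ * (y i / (x i + y i))) = 1 := by
      rw [← Finset.sum_add_distrib]
      have : ∀ i ∈ s, ((q : ℝ≥0))⁻¹ * (x i / (x i + y i))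
          + ((q : ℝ≥0))⁻¹ * (y i / (x i + y i)) = ((q : ℝ≥0))⁻¹ := by
        intro i hi
        rw [← mul_add, ← add_div, div_self (hall i hi), mul_one]
      rw [Finset.sum_congr rfl this]
      exact hwsum
    have hZpos : (0 : ℝ≥0) < (∏ i ∈ s, (x i + y i)) ^ ((q : ℝ)⁻¹) :=
      NNReal.rpow_pos (pos_iff_ne_zero.mpr hZ)
    have hfin : ((∏ i ∈ s, x i) ^ ((q : ℝ)⁻¹) + (∏ i ∈ s, y i) ^ ((q : ℝ)⁻¹))
        / (∏ i ∈ s, (x i + y i)) ^ ((q : ℝ)⁻¹) ≤ 1 := by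
      rw [add_div]
      calc _ ≤ (∑ i ∈ s, ((q : ℝ≥0))⁻¹ * (x i / (x i + y i)))
            + (∑ i ∈ s, ((q : ℝ≥0))⁻¹ * (y i / (x i + y i))) := add_le_add hx hy
        _ = 1 := hsum
    exact (div_le_one hZpos).mp hfin

/-- The key combination step. -/
lemma key {ι : Type*} (s : Finset ι) (q : ℕ) (hq : 0 < q) (hs : s.card = q)
    (x y : ι → ℕ) (α β C : ℕ)
    (hα : α ^ q ≤ (∏ i ∈ s, x i) * C) (hβ : β ^ q ≤ (∏ i ∈ s, y i) * C) :
    (α + β) ^ q ≤ (∏ i ∈ s, (x i + y i)) * C := by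
  have hmono : ∀ a P : ℝ≥0, a ^ q ≤ P → a ≤ P ^ ((q : ℝ)⁻¹) := by
    intro a P hP
    calc a = (a ^ q) ^ ((q : ℝ)⁻¹) := (NNReal.pow_rpow_inv_natCast a hq.ne').symm
      _ ≤ P ^ ((q : ℝ)⁻¹) := NNReal.rpow_le_rpow hP (by positivity)
  rw [← Nat.cast_le (α := ℝ≥0)] at hα hβ ⊢
  push_cast at hα hβ ⊢
  have h1 : (α : ℝ≥0) + β
      ≤ ((∏ i ∈ s, ((x i : ℝ≥0) + y i)) * C) ^ ((q : ℝ)⁻¹) := by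
    calc (α : ℝ≥0) + β
        ≤ ((∏ i ∈ s, (x i : ℝ≥0)) * C) ^ ((q : ℝ)⁻¹)
          + ((∏ i ∈ s, (y i : ℝ≥0)) * C) ^ ((q : ℝ)⁻¹) :=
          add_le_add (hmono _ _ hα) (hmono _ _ hβ)
      _ = ((∏ i ∈ s, (x i : ℝ≥0)) ^ ((q : ℝ)⁻¹)
            + (∏ i ∈ s, (y i : ℝ≥0)) ^ ((q : ℝ)⁻¹)) * (C : ℝ≥0) ^ ((q : ℝ)⁻¹) := by
          rw [NNReal.mul_rpow, NNReal.mul_rpow, add_mul]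
      _ ≤ (∏ i ∈ s, ((x i : ℝ≥0) + y i)) ^ ((q : ℝ)⁻¹) * (C : ℝ≥0) ^ ((q : ℝ)⁻¹) :=
          mul_le_mul_left (mahler s q hq hs _ _) _
      _ = ((∏ i ∈ s, ((x i : ℝ≥0) + y i)) * C) ^ ((q : ℝ)⁻¹) := (NNReal.mul_rpow).symm
  calc ((α : ℝ≥0) + β) ^ q
      ≤ (((∏ i ∈ s, ((x i : ℝ≥0) + y i)) * C) ^ ((q : ℝ)⁻¹)) ^ q :=
        pow_le_pow_left₀ zero_le h1 q
    _ = (∏ i ∈ s, ((x i : ℝ≥0) + y i)) * C :=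
        NNReal.rpow_inv_natCast_pow _ hq.ne'


variable {γ : Type*} [DecidableEq γ]

/-- Shearer's inequality for an exact uniform cover, product form. -/
lemma shearer {ι : Type*} :
    ∀ (N : ℕ) (E : Finset γ) (F : Finset (Finset γ)) (s : Finset ι) (A : ι → Finset γ)
      (q : ℕ), 0 < q → E.card = N →
      (∀ S ∈ F, S ⊆ E) →
      (∀ e ∈ E, (s.filter fun i => e ∈ A i).card = q) →
      F.card ^ q ≤ ∏ i ∈ s, (F.image (· ∩ A i)).card := by
  intro N
  induction N with
  | zero =>
    intro E F s A q hq hE hF hcov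
    classical
    have hE0 : E = ∅ := Finset.card_eq_zero.mp hE
    have h1 : F.card ≤ 1 := by
      have : F ⊆ {∅} := by
        intro S hS
        have := hF S hS
        rw [hE0, Finset.subset_empty] at this
        simp [this]
      simpa using Finset.card_le_card this
    rcases F.eq_empty_or_nonempty with rfl | hne
    · rw [Finset.card_empty, Nat.zero_pow hq]
      exact Nat.zero_le _
    · calc F.card ^ q ≤ 1 ^ q := Nat.pow_le_pow_left h1 q
        _ = 1 := one_pow q
        _ ≤ _ := Finset.one_le_prod' fun i _ =>
            Nat.one_le_iff_ne_zero.mpr (Finset.card_ne_zero_of_mem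
              (Finset.mem_image_of_mem _ hne.choose_spec))
  | succ N ih =>
    intro E F s A q hq hE hF hcov
    classical
    rcases F.eq_empty_or_nonempty with rfl | hne
    · rw [Finset.card_empty, Nat.zero_pow hq]
      exact Nat.zero_le _
    obtain ⟨e, he⟩ := Finset.card_pos.mp (by omega : 0 < E.card)
    set F0 : Finset (Finset γ) := F.filter (fun S => e ∉ S) with hF0def
    set F1 : Finset (Finset γ) := (F.filter (fun S => e ∈ S)).image (fun S => S.erase e)
      with hF1def
    -- cardinality split
    have hinj : Set.InjOn (fun S : Finset γ => S.erase e) ↑(F.filter (fun S => e ∈ S)) := by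
      intro S hS T hT hST
      simp only [Finset.coe_filter, Set.mem_setOf_eq] at hS hT
      have := congrArg (insert e) hST
      simpa [Finset.insert_erase hS.2, Finset.insert_erase hT.2] using this
    have hcard : F.card = F0.card + F1.card := by
      rw [hF1def, Finset.card_image_of_injOn hinj, hF0def]
      rw [add_comm]
      exact (Finset.card_filter_add_card_filter_not (p := fun S => e ∈ S)).symm
    -- the two subfamilies on the smaller ground set
    have hE' : (E.erase e).card = N := by
      rw [Finset.card_erase_of_mem he, hE]; rfl
    have hF0sub : ∀ S ∈ F0, S ⊆ E.erase e := by
      intro S hS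
      rw [hF0def, Finset.mem_filter] at hS
      exact Finset.subset_erase.mpr ⟨hF S hS.1, hS.2⟩
    have hF1sub : ∀ T ∈ F1, T ⊆ E.erase e := by
      intro T hT
      rw [hF1def, Finset.mem_image] at hT
      obtain ⟨S, hS, rfl⟩ := hT
      rw [Finset.mem_filter] at hS
      exact Finset.erase_subset_erase e (hF S hS.1)
    have hcov' : ∀ e' ∈ E.erase e,
        (s.filter fun i => e' ∈ (A i).erase e).card = q := by
      intro e' he'
      rw [Finset.mem_erase] at he'
      have : (s.filter fun i => e' ∈ (A i).erase e)
          = (s.filter fun i => e' ∈ A i) := by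
        apply Finset.filter_congr
        intro i _
        simp [Finset.mem_erase, he'.1]
      rw [this]
      exact hcov e' he'.2
    have ih0 := ih (E.erase e) F0 s (fun i => (A i).erase e) q hq hE' hF0sub hcov'
    have ih1 := ih (E.erase e) F1 s (fun i => (A i).erase e) q hq hE' hF1sub hcov'
    -- split the index set
    set s1 : Finset ι := s.filter (fun i => e ∈ A i) with hs1def
    set s2 : Finset ι := s.filter (fun i => e ∉ A i) with hs2def
    have hs1card : s1.card = q := hcov e he
    -- bounds for i ∈ s2
    have hb0 : ∀ i ∈ s2, (F0.image (· ∩ (A i).erase e)).card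
        ≤ (F.image (· ∩ A i)).card := by
      intro i hi
      rw [hs2def, Finset.mem_filter] at hi
      rw [Finset.erase_eq_of_notMem hi.2]
      exact Finset.card_le_card (Finset.image_subset_image (Finset.filter_subset _ _))
    have hb1 : ∀ i ∈ s2, (F1.image (· ∩ (A i).erase e)).card
        ≤ (F.image (· ∩ A i)).card := by
      intro i hi
      rw [hs2def, Finset.mem_filter] at hi
      rw [Finset.erase_eq_of_notMem hi.2]
      apply Finset.card_le_card
      intro T hT
      rw [Finset.mem_image] at hT
      obtain ⟨T', hT', rfl⟩ := hT
      rw [hF1def, Finset.mem_image] at hT'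
      obtain ⟨S, hS, rfl⟩ := hT'
      rw [Finset.mem_filter] at hS
      refine Finset.mem_image.mpr ⟨S, hS.1, ?_⟩
      symm
      show S.erase e ∩ A i = S ∩ A i
      rw [Finset.erase_inter, Finset.erase_eq_of_notMem]
      simp [hi.2]
    -- bound for i ∈ s1
    have hb01 : ∀ i ∈ s1,
        (F0.image (· ∩ (A i).erase e)).card + (F1.image (· ∩ (A i).erase e)).card
          ≤ (F.image (· ∩ A i)).card := by
      intro i hi
      rw [hs1def, Finset.mem_filter] at hi
      set X := F0.image (· ∩ (A i).erase e) with hX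
      set Y' := F1.image (· ∩ (A i).erase e) with hY'
      have heY' : ∀ T ∈ Y', e ∉ T := by
        intro T hT
        rw [hY', Finset.mem_image] at hT
        obtain ⟨S, _, rfl⟩ := hT
        simp [Finset.mem_inter, Finset.mem_erase]
      have heX : ∀ T ∈ X, e ∉ T := by
        intro T hT
        rw [hX, Finset.mem_image] at hT
        obtain ⟨S, _, rfl⟩ := hT
        simp [Finset.mem_inter, Finset.mem_erase]
      set Y := Y'.image (insert e) with hY
      have hYcard : Y.card = Y'.card := by
        apply Finset.card_image_of_injOn
        intro u hu v hv huv
        have := congrArg (fun W => Finset.erase W e) huv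
        simpa [Finset.erase_insert (heY' u hu), Finset.erase_insert (heY' v hv)] using this
      have hXsub : X ⊆ F.image (· ∩ A i) := by
        intro T hT
        rw [hX, Finset.mem_image] at hT
        obtain ⟨S, hS, rfl⟩ := hT
        rw [hF0def, Finset.mem_filter] at hS
        refine Finset.mem_image.mpr ⟨S, hS.1, ?_⟩
        symm
        show S ∩ (A i).erase e = S ∩ A i
        rw [Finset.inter_erase, Finset.erase_eq_of_notMem]
        simp [hS.2]
      have hYsub : Y ⊆ F.image (· ∩ A i) := by
        intro T hT
        rw [hY, Finset.mem_image] at hT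
        obtain ⟨T', hT', rfl⟩ := hT
        rw [hY', Finset.mem_image] at hT'
        obtain ⟨W, hW, rfl⟩ := hT'
        rw [hF1def, Finset.mem_image] at hW
        obtain ⟨S, hS, rfl⟩ := hW
        rw [Finset.mem_filter] at hS
        refine Finset.mem_image.mpr ⟨S, hS.1, ?_⟩
        symm
        show insert e (S.erase e ∩ (A i).erase e) = S ∩ A i
        rw [Finset.erase_inter, Finset.inter_erase, Finset.erase_idem,
          Finset.insert_erase (Finset.mem_inter.mpr ⟨hS.2, hi.2⟩)]
      have hdisj : Disjoint X Y := by
        rw [Finset.disjoint_left]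
        intro T hTX hTY
        rw [hY, Finset.mem_image] at hTY
        obtain ⟨T', _, rfl⟩ := hTY
        exact heX _ hTX (Finset.mem_insert_self e T')
      calc X.card + Y'.card = X.card + Y.card := by rw [hYcard]
        _ = (X ∪ Y).card := (Finset.card_union_of_disjoint hdisj).symm
        _ ≤ (F.image (· ∩ A i)).card :=
            Finset.card_le_card (Finset.union_subset hXsub hYsub)
    -- put everything together
    have hsplit : ∀ (G : Finset (Finset γ)),
        ∏ i ∈ s, (G.image (· ∩ (A i).erase e)).card
          = (∏ i ∈ s1, (G.image (· ∩ (A i).erase e)).card)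
            * ∏ i ∈ s2, (G.image (· ∩ (A i).erase e)).card := fun G =>
      (Finset.prod_filter_mul_prod_filter_not s _ _).symm
    set C : ℕ := ∏ i ∈ s2, (F.image (· ∩ A i)).card with hC
    have hα : F0.card ^ q ≤ (∏ i ∈ s1, (F0.image (· ∩ (A i).erase e)).card) * C := by
      calc F0.card ^ q ≤ _ := ih0
        _ = _ := hsplit F0
        _ ≤ _ := Nat.mul_le_mul_left _ (Finset.prod_le_prod' hb0)
    have hβ : F1.card ^ q ≤ (∏ i ∈ s1, (F1.image (· ∩ (A i).erase e)).card) * C := by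
      calc F1.card ^ q ≤ _ := ih1
        _ = _ := hsplit F1
        _ ≤ _ := Nat.mul_le_mul_left _ (Finset.prod_le_prod' hb1)
    have hkey := key s1 q hq hs1card
      (fun i => (F0.image (· ∩ (A i).erase e)).card)
      (fun i => (F1.image (· ∩ (A i).erase e)).card)
      F0.card F1.card C hα hβ
    calc F.card ^ q = (F0.card + F1.card) ^ q := by rw [hcard]
      _ ≤ (∏ i ∈ s1, ((F0.image (· ∩ (A i).erase e)).card
            + (F1.image (· ∩ (A i).erase e)).card)) * C := hkey
      _ ≤ (∏ i ∈ s1, (F.image (· ∩ A i)).card) * C :=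
          Nat.mul_le_mul_right _ (Finset.prod_le_prod' hb01)
      _ = ∏ i ∈ s, (F.image (· ∩ A i)).card :=
          (Finset.prod_filter_mul_prod_filter_not s _ _)


/-- An intersecting family of subsets of `B` has at most `2 ^ |B| / 2` members. -/
lemma half_bound (B : Finset γ) (P : Finset (Finset γ)) (hP : ∀ S ∈ P, S ⊆ B)
    (hint : ∀ S ∈ P, ∀ S' ∈ P, (S ∩ S').Nonempty) : 2 * P.card ≤ 2 ^ B.card := by
  classical
  have hPp : P ⊆ B.powerset := fun S hS => Finset.mem_powerset.mpr (hP S hS)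
  set Q := P.image (fun S => B \ S) with hQ
  have hQp : Q ⊆ B.powerset := by
    intro T hT
    rw [hQ, Finset.mem_image] at hT
    obtain ⟨S, _, rfl⟩ := hT
    exact Finset.mem_powerset.mpr (Finset.sdiff_subset)
  have hQcard : Q.card = P.card := Finset.card_image_of_injOn (by
    intro u hu v hv huv
    have := congrArg (fun W => B \ W) huv
    simpa [Finset.sdiff_sdiff_eq_self (hP u hu), Finset.sdiff_sdiff_eq_self (hP v hv)]
      using this)
  have hdisj : Disjoint P Q := by
    rw [Finset.disjoint_left]
    intro S hSP hSQ
    rw [hQ, Finset.mem_image] at hSQ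
    obtain ⟨S', hS', rfl⟩ := hSQ
    obtain ⟨x, hx⟩ := hint S' hS' (B \ S') hSP
    rw [Finset.mem_inter, Finset.mem_sdiff] at hx
    exact hx.2.2 hx.1
  calc 2 * P.card = P.card + Q.card := by rw [hQcard]; ring
    _ = (P ∪ Q).card := (Finset.card_union_of_disjoint hdisj).symm
    _ ≤ B.powerset.card := Finset.card_le_card (Finset.union_subset hPp hQp)
    _ = 2 ^ B.card := Finset.card_powerset B

/-- The number of colorings identifying two fixed distinct vertices. -/
lemma count_colorings {n m : ℕ} {u v : Fin n} (huv : u ≠ v) :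
    (Finset.univ.filter fun c : Fin n → Fin m => c u = c v).card = m ^ (n - 1) := by
  classical
  rw [← Fintype.card_subtype]
  have e : {c : Fin n → Fin m // c u = c v} ≃ ({w : Fin n // w ≠ u} → Fin m) :=
    { toFun := fun c w => c.1 w.1
      invFun := fun g => ⟨fun w => if h : w = u then g ⟨v, huv.symm⟩ else g ⟨w, h⟩, by
        simp [huv.symm]⟩
      left_inv := by
        rintro ⟨c, hc⟩
        ext w
        by_cases hw : w = u
        · subst hw; simp [hc]
        · simp [hw]
      right_inv := by
        intro g
        ext w
        simp [w.2] }
  rw [Fintype.card_congr e, Fintype.card_fun]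
  congr 1
  · simp
  · rw [Fintype.card_subtype_compl, Fintype.card_subtype_eq, Fintype.card_fin]


end KtAux

open KtAux Finset

/-- A `K_t`-intersecting family of graphs on `n` vertices (`t ≥ 2`) has size at
most `2^(C(n,2) - (t - 1))`. -/
theorem Kt_intersecting_family_bound {n t : ℕ} (ht : 2 ≤ t)
    (𝒢 : Set (SimpleGraph (Fin n)))
    (h : ∀ G₁ ∈ 𝒢, ∀ G₂ ∈ 𝒢,
      ∃ f : (⊤ : SimpleGraph (Fin t)) →g (G₁ ⊓ G₂), Function.Injective f) :
    𝒢.ncard ≤ 2 ^ (n.choose 2 - (t - 1)) := by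
  classical
  rcases 𝒢.eq_empty_or_nonempty with rfl | ⟨G₀, hG₀⟩
  · simp
  obtain ⟨f₀, hf₀⟩ := h G₀ hG₀ G₀ hG₀
  have htn : t ≤ n := by
    simpa using Fintype.card_le_of_injective _ hf₀
  have hn1 : 1 ≤ n := by omega
  -- ground set and parameters
  set E : Finset (Sym2 (Fin n)) := Finset.univ.filter (fun z => ¬ z.IsDiag) with hEdef
  set q : ℕ := (t - 1) ^ (n - 1) with hqdef
  have hqpos : 0 < q := Nat.pow_pos (by omega)
  have hEcard : E.card = n.choose 2 := by
    rw [hEdef, ← Fintype.card_subtype]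
    rw [Sym2.card_subtype_not_diag, Fintype.card_fin]
  -- the cover: monochromatic edges of colorings
  set B : (Fin n → Fin (t - 1)) → Finset (Sym2 (Fin n)) :=
    fun c => Finset.univ.filter (fun z => ¬ z.IsDiag ∧ (z.map c).IsDiag) with hBdef
  have hBsub : ∀ c, B c ⊆ E := by
    intro c z hz
    rw [hBdef, Finset.mem_filter] at hz
    rw [hEdef, Finset.mem_filter]
    exact ⟨Finset.mem_univ _, hz.2.1⟩
  -- the family of edge sets
  have hGfin : 𝒢.Finite := by
    have : Finite (SimpleGraph (Fin n)) :=
      Finite.of_injective (fun G => G.Adj)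
        (fun G H hGH => by ext u v; exact iff_of_eq (congrFun (congrFun hGH u) v))
    exact Set.toFinite 𝒢
  set F : Finset (Finset (Sym2 (Fin n))) :=
    hGfin.toFinset.image (fun G => G.edgeSet.toFinite.toFinset) with hFdef
  have hinjF : Set.InjOn (fun G : SimpleGraph (Fin n) => G.edgeSet.toFinite.toFinset)
      ↑hGfin.toFinset := by
    intro G hG G' hG' hEq
    simp only [Set.Finite.toFinset_inj] at hEq
    exact SimpleGraph.edgeSet_inj.mp hEq
  have hFcard : F.card = 𝒢.ncard := by
    rw [hFdef, Finset.card_image_of_injOn hinjF, Set.ncard_eq_toFinset_card 𝒢 hGfin]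
  have hFsub : ∀ S ∈ F, S ⊆ E := by
    intro S hS
    rw [hFdef, Finset.mem_image] at hS
    obtain ⟨G, _, rfl⟩ := hS
    intro z hz
    rw [Set.Finite.mem_toFinset] at hz
    rw [hEdef, Finset.mem_filter]
    exact ⟨Finset.mem_univ _, SimpleGraph.not_isDiag_of_mem_edgeSet G hz⟩
  -- coverage: every nondiagonal pair is monochromatic in exactly q colorings
  have hcov : ∀ e ∈ E, (Finset.univ.filter fun c => e ∈ B c).card = q := by
    intro e he
    rw [hEdef, Finset.mem_filter] at he
    have hrw : (Finset.univ.filter fun c => e ∈ B c)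
        = (Finset.univ.filter fun c => (e.map c).IsDiag) := by
      apply Finset.filter_congr
      intro c _
      rw [hBdef]
      simp [he.2]
    rw [hrw]
    induction e using Sym2.inductionOn with
    | hf u v =>
      have huv : u ≠ v := by
        intro hEq
        exact he.2 (by simp [hEq])
      have : (Finset.univ.filter fun c : Fin n → Fin (t - 1) => (Sym2.map c s(u, v)).IsDiag)
          = (Finset.univ.filter fun c => c u = c v) := by
        apply Finset.filter_congr
        intro c _
        simp [Sym2.map_pair_eq, Sym2.isDiag_iff_proj_eq]
      rw [this, count_colorings huv]
  -- each projection is intersecting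
  have hint : ∀ c, ∀ S ∈ F.image (· ∩ B c), ∀ S' ∈ F.image (· ∩ B c),
      (S ∩ S').Nonempty := by
    intro c S hS S' hS'
    rw [Finset.mem_image] at hS hS'
    obtain ⟨W, hW, rfl⟩ := hS
    obtain ⟨W', hW', rfl⟩ := hS'
    rw [hFdef, Finset.mem_image] at hW hW'
    obtain ⟨G, hG, rfl⟩ := hW
    obtain ⟨G', hG', rfl⟩ := hW'
    rw [Set.Finite.mem_toFinset] at hG hG'
    obtain ⟨f, hf⟩ := h G hG G' hG'
    obtain ⟨i, j, hij, hcij⟩ := Fintype.exists_ne_map_eq_of_card_lt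
      (fun i : Fin t => c (f i)) (by simp [Fintype.card_fin]; omega)
    have hfij : f i ≠ f j := fun hEq => hij (hf hEq)
    have hadj : (G ⊓ G').Adj (f i) (f j) := f.map_adj (by simp [hij])
    refine ⟨s(f i, f j), ?_⟩
    have hzB : s(f i, f j) ∈ B c := by
      rw [hBdef, Finset.mem_filter]
      refine ⟨Finset.mem_univ _, ?_, ?_⟩
      · simp [Sym2.isDiag_iff_proj_eq, hfij]
      · simp [Sym2.map_pair_eq, Sym2.isDiag_iff_proj_eq, hcij]
    simp only [Finset.mem_inter, Set.Finite.mem_toFinset, SimpleGraph.mem_edgeSet]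
    exact ⟨⟨hadj.1, hzB⟩, hadj.2, hzB⟩
  -- Shearer
  have hshearer := shearer E.card E F Finset.univ B q hqpos rfl hFsub hcov
  -- half bound for each projection
  have hhalf : ∀ c, 2 * (F.image (· ∩ B c)).card ≤ 2 ^ (B c).card := by
    intro c
    apply half_bound
    · intro S hS
      rw [Finset.mem_image] at hS
      obtain ⟨W, _, rfl⟩ := hS
      exact Finset.inter_subset_right
    · exact hint c
  -- sum of the sizes of the cover sets
  have hBsum : ∑ c, (B c).card = E.card * q := by
    have h1 : ∀ c, (B c).card = ∑ e ∈ E, if e ∈ B c then 1 else 0 := by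
      intro c
      rw [← Finset.card_filter]
      congr 1
      rw [Finset.filter_mem_eq_inter, Finset.inter_eq_right.mpr (hBsub c)]
    calc ∑ c, (B c).card = ∑ c, ∑ e ∈ E, if e ∈ B c then 1 else 0 :=
          Finset.sum_congr rfl (fun c _ => h1 c)
      _ = ∑ e ∈ E, ∑ c, if e ∈ B c then 1 else 0 := Finset.sum_comm
      _ = ∑ e ∈ E, (Finset.univ.filter fun c => e ∈ B c).card :=
          Finset.sum_congr rfl (fun e _ => (Finset.card_filter _ _).symm)
      _ = ∑ e ∈ E, q := Finset.sum_congr rfl (fun e he => hcov e he)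
      _ = E.card * q := by rw [Finset.sum_const, smul_eq_mul]
  -- number of colorings
  have hk : (Finset.univ : Finset (Fin n → Fin (t - 1))).card = (t - 1) * q := by
    rw [Finset.card_univ, Fintype.card_fun, Fintype.card_fin, Fintype.card_fin, hqdef]
    rw [← pow_succ']
    congr 1
    omega
  -- combine
  have hmain : 2 ^ ((t - 1) * q) * F.card ^ q ≤ 2 ^ (E.card * q) := by
    calc 2 ^ ((t - 1) * q) * F.card ^ q
        ≤ 2 ^ ((t - 1) * q) * ∏ c, (F.image (· ∩ B c)).card :=
          Nat.mul_le_mul_left _ hshearer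
      _ = ∏ c, 2 * (F.image (· ∩ B c)).card := by
          rw [Finset.prod_mul_distrib, Finset.prod_const, hk]
      _ ≤ ∏ c, 2 ^ (B c).card := Finset.prod_le_prod' (fun c _ => hhalf c)
      _ = 2 ^ (∑ c, (B c).card) := Finset.prod_pow_eq_pow_sum _ _ _
      _ = 2 ^ (E.card * q) := by rw [hBsum]
  have hm : t - 1 ≤ n.choose 2 := by
    have h2 : t.choose 2 ≤ n.choose 2 := Nat.choose_le_choose 2 htn
    have h3 : t - 1 ≤ t.choose 2 := by
      rw [Nat.choose_two_right]
      rw [Nat.le_div_iff_mul_le two_pos]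
      calc (t - 1) * 2 ≤ (t - 1) * t := Nat.mul_le_mul_left _ (by omega)
        _ = t * (t - 1) := Nat.mul_comm _ _
      
    omega
  have hsplit : E.card * q = (t - 1) * q + (n.choose 2 - (t - 1)) * q := by
    rw [hEcard, ← Nat.add_mul]
    congr 1
    omega
  have hfinal : F.card ^ q ≤ (2 ^ (n.choose 2 - (t - 1))) ^ q := by
    rw [← pow_mul]
    have := hmain
    rw [hsplit, pow_add] at this
    exact Nat.le_of_mul_le_mul_left this (Nat.pow_pos two_pos)
  rw [← hFcard]
  exact (Nat.pow_le_pow_iff_left hqpos.ne').mp hfinal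
end

section
/- Let $G$ be a finite simple graph on $n$ vertices, and for $\ell \in \mathbb{N}$ let $m_\ell$ denote the number of cliques of order $\ell$ in $G$. Then for all integers $2 \leq s < t \leq n$, $(t! \, m_t)^s \leq (s! \, m_s)^t$. -/
section CliqueCountAux

open Finset

variable {V : Type*} [Fintype V] [DecidableEq V]

/-- The restriction of `G` to edges inside `A`, as a graph on the same vertex set. -/
def restrictN (G : SimpleGraph V) (A : Finset V) : SimpleGraph V where
  Adj a b := G.Adj a b ∧ a ∈ A ∧ b ∈ A
  symm := ⟨fun a b ⟨h, ha, hb⟩ => ⟨h.symm, hb, ha⟩⟩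
  loopless := ⟨fun a ⟨h, _⟩ => G.loopless.irrefl a h⟩

instance (G : SimpleGraph V) [DecidableRel G.Adj] (A : Finset V) :
    DecidableRel (restrictN G A).Adj :=
  fun a b => inferInstanceAs (Decidable (G.Adj a b ∧ a ∈ A ∧ b ∈ A))

lemma restrictN_cliqueFinset (G : SimpleGraph V) [DecidableRel G.Adj] (A : Finset V)
    {ℓ : ℕ} (hℓ : 2 ≤ ℓ) :
    (restrictN G A).cliqueFinset ℓ = (G.cliqueFinset ℓ).filter (· ⊆ A) := by
  ext s
  simp only [SimpleGraph.mem_cliqueFinset_iff, SimpleGraph.isNClique_iff, mem_filter]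
  constructor
  · rintro ⟨hc, hcard⟩
    refine ⟨⟨fun a ha b hb hab => (hc ha hb hab).1, hcard⟩, fun a ha => ?_⟩
    obtain ⟨b, hb, hba⟩ := Finset.exists_mem_ne (by omega : 1 < s.card) a
    exact (hc (by exact_mod_cast ha) (by exact_mod_cast hb) (Ne.symm hba)).2.1
  · rintro ⟨⟨hc, hcard⟩, hsub⟩
    exact ⟨fun a ha b hb hab => ⟨hc ha hb hab, hsub ha, hsub hb⟩, hcard⟩

lemma clique_recursion (G : SimpleGraph V) [DecidableRel G.Adj] (ℓ : ℕ) :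
    (ℓ + 1) * (G.cliqueFinset (ℓ + 1)).card =
      ∑ v : V, ((G.cliqueFinset ℓ).filter (· ⊆ G.neighborFinset v)).card := by
  have hL : (ℓ + 1) * (G.cliqueFinset (ℓ + 1)).card =
      ((G.cliqueFinset (ℓ + 1)).sigma fun D => D).card := by
    rw [Finset.card_sigma]
    rw [Finset.sum_congr rfl (fun D hD => (SimpleGraph.mem_cliqueFinset_iff.mp hD).card_eq)]
    rw [Finset.sum_const, smul_eq_mul, mul_comm]
  have hR : ∑ v : V, ((G.cliqueFinset ℓ).filter (· ⊆ G.neighborFinset v)).card =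
      ((G.cliqueFinset ℓ).sigma fun C => univ.filter fun v => C ⊆ G.neighborFinset v).card := by
    rw [Finset.card_sigma]
    simp_rw [Finset.card_filter]
    rw [Finset.sum_comm]
  rw [hL, hR]
  refine Finset.card_bij' (fun p _ => ⟨p.1.erase p.2, p.2⟩)
    (fun q _ => ⟨insert q.2 q.1, q.2⟩) ?_ ?_ ?_ ?_
  · rintro ⟨D, v⟩ hp
    rw [Finset.mem_sigma] at hp ⊢
    obtain ⟨hD, hv⟩ := hp
    rw [SimpleGraph.mem_cliqueFinset_iff] at hD
    refine ⟨SimpleGraph.mem_cliqueFinset_iff.mpr ?_, ?_⟩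
    · refine ⟨hD.isClique.subset (Finset.coe_subset.mpr (Finset.erase_subset _ _)), ?_⟩
      rw [Finset.card_erase_of_mem hv, hD.card_eq]
      omega
    · simp only [mem_filter, mem_univ, true_and]
      intro u hu
      rw [Finset.mem_erase] at hu
      rw [SimpleGraph.mem_neighborFinset]
      exact (hD.isClique (by exact_mod_cast hv) (by exact_mod_cast hu.2) (Ne.symm hu.1))
  · rintro ⟨C, v⟩ hq
    rw [Finset.mem_sigma] at hq ⊢
    obtain ⟨hC, hv⟩ := hq
    simp only [mem_filter, mem_univ, true_and] at hv
    rw [SimpleGraph.mem_cliqueFinset_iff] at hC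
    refine ⟨SimpleGraph.mem_cliqueFinset_iff.mpr ?_, Finset.mem_insert_self _ _⟩
    exact hC.insert fun b hb => (SimpleGraph.mem_neighborFinset _ _ _).mp (hv hb)
  · rintro ⟨D, v⟩ hp
    rw [Finset.mem_sigma] at hp
    simp only [Sigma.mk.inj_iff, heq_eq_eq, and_true]
    exact Finset.insert_erase hp.2
  · rintro ⟨C, v⟩ hq
    rw [Finset.mem_sigma] at hq
    simp only [mem_filter, mem_univ, true_and] at hq
    simp only [Sigma.mk.inj_iff, heq_eq_eq, and_true]
    refine Finset.erase_insert fun hvC => ?_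
    have := hq.2 hvC
    rw [SimpleGraph.mem_neighborFinset] at this
    exact G.loopless.irrefl v this

lemma nat_holder {ι : Type*} (s : Finset ι) (a b : ι → ℕ) {m : ℕ} (hm : m ≠ 0)
    (h : ∀ v ∈ s, a v ^ m ≤ b v ^ m * ∑ u ∈ s, b u) :
    (∑ v ∈ s, a v) ^ m ≤ (∑ v ∈ s, b v) ^ (m + 1) := by
  set S := ∑ u ∈ s, b u with hS
  have key : ∀ g ∈ Fintype.piFinset (fun _ : Fin m => s),
      ∏ j : Fin m, a (g j) ≤ S * ∏ j : Fin m, b (g j) := by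
    intro g hg
    rw [Fintype.mem_piFinset] at hg
    rw [← Nat.pow_le_pow_iff_left hm]
    calc (∏ j : Fin m, a (g j)) ^ m = ∏ j : Fin m, a (g j) ^ m := by
            rw [Finset.prod_pow]
      _ ≤ ∏ j : Fin m, b (g j) ^ m * S := Finset.prod_le_prod' fun j _ => h (g j) (hg j)
      _ = (S * ∏ j : Fin m, b (g j)) ^ m := by
            rw [Finset.prod_mul_distrib, Finset.prod_pow, Finset.prod_const,
              Finset.card_univ, Fintype.card_fin, mul_pow]
            ring
  calc (∑ v ∈ s, a v) ^ m = ∏ _j : Fin m, ∑ v ∈ s, a v := by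
        rw [Finset.prod_const, Finset.card_univ, Fintype.card_fin]
    _ = ∑ g ∈ Fintype.piFinset (fun _ : Fin m => s), ∏ j : Fin m, a (g j) :=
        Finset.prod_univ_sum _ _
    _ ≤ ∑ g ∈ Fintype.piFinset (fun _ : Fin m => s), S * ∏ j : Fin m, b (g j) :=
        Finset.sum_le_sum key
    _ = S * ∑ g ∈ Fintype.piFinset (fun _ : Fin m => s), ∏ j : Fin m, b (g j) := by
        rw [Finset.mul_sum]
    _ = S * (∑ v ∈ s, b v) ^ m := by
        rw [← Finset.prod_univ_sum, Finset.prod_const, Finset.card_univ, Fintype.card_fin]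
    _ = S ^ (m + 1) := by rw [← hS, pow_succ, mul_comm]

lemma card_filter_one (G : SimpleGraph V) [DecidableRel G.Adj] (v : V) :
    ((G.cliqueFinset 1).filter (· ⊆ G.neighborFinset v)).card = (G.neighborFinset v).card := by
  have : (G.cliqueFinset 1).filter (· ⊆ G.neighborFinset v) =
      (G.neighborFinset v).image ({·}) := by
    ext C
    simp only [mem_filter, SimpleGraph.mem_cliqueFinset_iff, SimpleGraph.isNClique_one,
      mem_image]
    constructor
    · rintro ⟨⟨a, rfl⟩, hsub⟩
      exact ⟨a, hsub (Finset.mem_singleton_self a), rfl⟩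
    · rintro ⟨a, ha, rfl⟩
      exact ⟨⟨a, rfl⟩, Finset.singleton_subset_iff.mpr ha⟩
  rw [this, Finset.card_image_of_injective _ fun x y h => by
    simpa using h]

lemma card_filter_two (G : SimpleGraph V) [DecidableRel G.Adj] (v : V) :
    2 * ((G.cliqueFinset 2).filter (· ⊆ G.neighborFinset v)).card ≤
      ((G.cliqueFinset 1).filter (· ⊆ G.neighborFinset v)).card ^ 2 := by
  rw [card_filter_one]
  set d := (G.neighborFinset v).card
  have h1 : (G.cliqueFinset 2).filter (· ⊆ G.neighborFinset v) ⊆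
      (G.neighborFinset v).powersetCard 2 := by
    intro C hC
    rw [mem_filter, SimpleGraph.mem_cliqueFinset_iff] at hC
    rw [Finset.mem_powersetCard]
    exact ⟨hC.2, hC.1.card_eq⟩
  have h2 := Finset.card_le_card h1
  rw [Finset.card_powersetCard] at h2
  calc 2 * ((G.cliqueFinset 2).filter (· ⊆ G.neighborFinset v)).card ≤ 2 * d.choose 2 :=
        Nat.mul_le_mul_left _ h2
    _ ≤ d * (d - 1) := by rw [Nat.choose_two_right, mul_comm]; exact Nat.div_mul_le_self _ _
    _ ≤ d ^ 2 := by rw [sq]; exact Nat.mul_le_mul_left _ (Nat.sub_le _ _)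

lemma mainA : ∀ k : ℕ, 2 ≤ k → ∀ (G : SimpleGraph V), ∀ _ : DecidableRel G.Adj,
    ((k + 1).factorial * (G.cliqueFinset (k + 1)).card) ^ k ≤
      (k.factorial * (G.cliqueFinset k).card) ^ (k + 1) := by
  intro k hk
  induction k, hk using Nat.le_induction with
  | base =>
    intro G _
    set c : ℕ → V → ℕ := fun ℓ v => ((G.cliqueFinset ℓ).filter (· ⊆ G.neighborFinset v)).card
      with hc
    have hS : ∑ v : V, c 1 v = 2 * (G.cliqueFinset 2).card := (clique_recursion G 1).symm
    have hsum : ∑ v : V, 2 * c 2 v = Nat.factorial 3 * (G.cliqueFinset 3).card := by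
      rw [← Finset.mul_sum, ← clique_recursion G 2]
      norm_num [Nat.factorial]
      ring
    have key : ∀ v ∈ (univ : Finset V),
        (2 * c 2 v) ^ 2 ≤ (c 1 v) ^ 2 * ∑ u : V, c 1 u := by
      intro v _
      have h1 : 2 * c 2 v ≤ (c 1 v) ^ 2 := card_filter_two G v
      have h2 : 2 * c 2 v ≤ ∑ u : V, c 1 u := by
        rw [hS]
        exact Nat.mul_le_mul_left _ (Finset.card_filter_le _ _)
      calc (2 * c 2 v) ^ 2 = (2 * c 2 v) * (2 * c 2 v) := sq _
        _ ≤ (c 1 v) ^ 2 * ∑ u : V, c 1 u := Nat.mul_le_mul h1 h2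
    have := nat_holder (univ : Finset V) (fun v => 2 * c 2 v) (c 1) (two_ne_zero) key
    rw [hsum, hS] at this
    simpa [Nat.factorial] using this
  | succ k hk IH =>
    intro G _
    set c : ℕ → V → ℕ := fun ℓ v => ((G.cliqueFinset ℓ).filter (· ⊆ G.neighborFinset v)).card
      with hc
    set a : V → ℕ := fun v => (k + 1).factorial * c (k + 1) v with ha
    set b : V → ℕ := fun v => k.factorial * c k v with hb
    have hS : ∑ v : V, b v = (k + 1).factorial * (G.cliqueFinset (k + 1)).card := by
      rw [hb, ← Finset.mul_sum, ← clique_recursion G k, Nat.factorial_succ]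
      ring
    have hsum : ∑ v : V, a v = (k + 2).factorial * (G.cliqueFinset (k + 2)).card := by
      rw [ha, ← Finset.mul_sum, ← clique_recursion G (k + 1),
        show (k + 2).factorial = (k + 2) * (k + 1).factorial from Nat.factorial_succ _]
      ring
    have key : ∀ v ∈ (univ : Finset V), a v ^ (k + 1) ≤ b v ^ (k + 1) * ∑ u : V, b u := by
      intro v _
      have hIH := IH (restrictN G (G.neighborFinset v)) inferInstance
      rw [restrictN_cliqueFinset G _ (by omega), restrictN_cliqueFinset G _ (by omega)] at hIH
      have h1 : a v ^ k ≤ b v ^ (k + 1) := hIH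
      have h2 : a v ≤ ∑ u : V, b u := by
        rw [hS, ha]
        exact Nat.mul_le_mul_left _ (Finset.card_filter_le _ _)
      calc a v ^ (k + 1) = a v ^ k * a v := pow_succ _ _
        _ ≤ b v ^ (k + 1) * ∑ u : V, b u := Nat.mul_le_mul h1 h2
    have := nat_holder (univ : Finset V) a b (Nat.succ_ne_zero k) key
    rwa [hsum, hS] at this

end CliqueCountAux

section CliqueCountAux
open Finset

/-- Clique counts of different orders: `(t! m_t)^s ≤ (s! m_s)^t` for
`2 ≤ s < t ≤ n`. -/
theorem clique_count_inequality {V : Type*} [Fintype V] [DecidableEq V] {n : ℕ}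
    (hn : Fintype.card V = n)
    (G : SimpleGraph V) [DecidableRel G.Adj]
    {s t : ℕ} (hs : 2 ≤ s) (hst : s < t) (htn : t ≤ n) :
    (t.factorial * (G.cliqueFinset t).card) ^ s ≤
      (s.factorial * (G.cliqueFinset s).card) ^ t := by
  clear hn htn
  set N : ℕ → ℕ := fun ℓ => ℓ.factorial * (G.cliqueFinset ℓ).card with hN
  change N t ^ s ≤ N s ^ t
  have hst' : s + 1 ≤ t := hst
  induction t, hst' using Nat.le_induction with
  | base => exact mainA s hs G inferInstance
  | succ t ht IH =>
    have hA : N (t + 1) ^ t ≤ N t ^ (t + 1) := mainA t (by omega) G inferInstance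
    have ht0 : t ≠ 0 := by omega
    rw [← Nat.pow_le_pow_iff_left ht0]
    calc (N (t + 1) ^ s) ^ t = (N (t + 1) ^ t) ^ s := by rw [← pow_mul, ← pow_mul, mul_comm]
      _ ≤ (N t ^ (t + 1)) ^ s := Nat.pow_le_pow_left hA s
      _ = (N t ^ s) ^ (t + 1) := by rw [← pow_mul, ← pow_mul, mul_comm]
      _ ≤ (N s ^ t) ^ (t + 1) := Nat.pow_le_pow_left (IH (by omega)) _
      _ = (N s ^ (t + 1)) ^ t := by rw [← pow_mul, ← pow_mul, mul_comm]

end CliqueCountAux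
end

section
/- Let $G$ be a simple bipartite graph with no isolated vertices, with parts of sizes $n_1$ and $n_2$, and $|E(G)| = \alpha n_1 n_2$ for some $\alpha \in (0,1]$. Then for all positive integers $s, t$, the number of graph homomorphisms from $K_{s,t}$ to $G$ satisfies $\hom(K_{s,t}, G) \leq (2\alpha n_1 n_2)^{\max\{s,t\}}$. -/
/-- Upper bound on the number of homomorphisms from the complete bipartite
graph `K_{s,t}` to a bipartite graph `G` with parts of sizes `n₁, n₂` and
`α n₁ n₂` edges: `hom(K_{s,t}, G) ≤ (2 α n₁ n₂)^{max{s,t}}`. -/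
theorem hom_count_upper_bound {n₁ n₂ : ℕ} {α : ℝ} (hα0 : 0 < α) (hα1 : α ≤ 1)
    (G : SimpleGraph (Fin n₁ ⊕ Fin n₂)) [DecidableRel G.Adj]
    (hbip1 : ∀ a b : Fin n₁, ¬ G.Adj (Sum.inl a) (Sum.inl b))
    (hbip2 : ∀ a b : Fin n₂, ¬ G.Adj (Sum.inr a) (Sum.inr b))
    (hiso : ∀ v, ∃ w, G.Adj v w)
    (hE : (G.edgeFinset.card : ℝ) = α * n₁ * n₂)
    (s t : ℕ) (hs : 0 < s) (ht : 0 < t) :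
    (Nat.card (completeBipartiteGraph (Fin s) (Fin t) →g G) : ℝ) ≤
      (2 * α * n₁ * n₂) ^ (max s t) := by
  -- adjacency of any cross pair under a hom
  have key : ∀ (f : completeBipartiteGraph (Fin s) (Fin t) →g G) (a : Fin s) (b : Fin t),
      G.Adj (f (Sum.inl a)) (f (Sum.inr b)) := by
    intro f a b
    exact f.map_adj (by simp)
  -- the injection into tuples of darts
  set m := max s t with hm
  have hsm : s ≤ m := le_max_left s t
  have htm : t ≤ m := le_max_right s t
  let Φ : (completeBipartiteGraph (Fin s) (Fin t) →g G) → (Fin m → G.Dart) := fun f j =>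
    ⟨(f (Sum.inl (if h : (j : ℕ) < s then ⟨j, h⟩ else ⟨0, hs⟩)),
      f (Sum.inr (if h : (j : ℕ) < t then ⟨j, h⟩ else ⟨0, ht⟩))), key f _ _⟩
  have hΦ : Function.Injective Φ := by
    intro f g hfg
    ext v
    cases v with
    | inl a =>
        have h1 := congrArg (fun F => (F (⟨a, lt_of_lt_of_le a.2 hsm⟩ : Fin m)).fst) hfg
        simpa [Φ, a.2] using h1
    | inr b =>
        have h1 := congrArg (fun F => (F (⟨b, lt_of_lt_of_le b.2 htm⟩ : Fin m)).snd) hfg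
        simpa [Φ, b.2] using h1
  have hcard : Nat.card (completeBipartiteGraph (Fin s) (Fin t) →g G)
      ≤ (2 * G.edgeFinset.card) ^ m := by
    calc Nat.card (completeBipartiteGraph (Fin s) (Fin t) →g G)
        ≤ Nat.card (Fin m → G.Dart) := Nat.card_le_card_of_injective Φ hΦ
      _ = (2 * G.edgeFinset.card) ^ m := by
          simp [Nat.card_eq_fintype_card, Fintype.card_fun,
            G.dart_card_eq_twice_card_edges]
  have h2 : (2 * α * n₁ * n₂ : ℝ) = ((2 * G.edgeFinset.card : ℕ) : ℝ) := by
    push_cast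
    rw [hE]; ring
  rw [h2, ← Nat.cast_pow]
  exact_mod_cast hcard
end

section
/- Let $G$ be a simple bipartite graph with no isolated vertices, with parts of sizes $n_1$ and $n_2$, and $|E(G)| = \alpha n_1 n_2$ for some $\alpha \in (0,1]$. Then for all positive integers $s, t$, $\hom(K_{s,t}, G) \geq \alpha^{st} \, \min\{n_1,n_2\}^{-|s-t|} \, (n_1 n_2)^{\max\{s,t\}}$. -/
open Finset

/-- counting identity: sum of common-neighborhood sizes equals sum of degrees to the `s`. -/
lemma sum_c_eq {m n s : ℕ} (r : Fin m → Fin n → Prop) [∀ u w, Decidable (r u w)] :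
    ∑ x : Fin s → Fin m, ((Finset.univ : Finset (Fin n)).filter fun w => ∀ i, r (x i) w).card
      = ∑ w : Fin n, ((Finset.univ : Finset (Fin m)).filter fun u => r u w).card ^ s := by
  simp_rw [Finset.card_filter]
  rw [Finset.sum_comm]
  refine Finset.sum_congr rfl fun w _ => ?_
  have h : ∀ x : Fin s → Fin m,
      (if ∀ i, r (x i) w then (1:ℕ) else 0) = ∏ i, if r (x i) w then 1 else 0 := by
    intro x; rw [Finset.prod_boole]; simp
  simp_rw [h]
  rw [← Fintype.piFinset_univ, ← Finset.prod_univ_sum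
    (fun _ : Fin s => (Finset.univ : Finset (Fin m))) (fun _ u => if r u w then 1 else 0),
    Finset.prod_const, Finset.card_univ, Fintype.card_fin]

/-- counting identity: number of "good" pairs of tuples. -/
lemma pair_count {m n s t : ℕ} (r : Fin m → Fin n → Prop) [∀ u w, Decidable (r u w)] :
    (Finset.univ.filter fun p : (Fin s → Fin m) × (Fin t → Fin n) =>
        ∀ i j, r (p.1 i) (p.2 j)).card
      = ∑ x : Fin s → Fin m, ((Finset.univ : Finset (Fin n)).filter fun w => ∀ i, r (x i) w).card ^ t := by
  rw [Finset.card_filter, Fintype.sum_prod_type]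
  refine Finset.sum_congr rfl fun x _ => ?_
  have h : ∀ y : Fin t → Fin n,
      (if ∀ i j, r (x i) (y j) then (1:ℕ) else 0)
        = if ∀ j, y j ∈ (Finset.univ : Finset (Fin n)).filter (fun w => ∀ i, r (x i) w) then 1 else 0 := by
    intro y
    simp only [Finset.mem_filter, Finset.mem_univ, true_and]
    congr 1
    simp only [eq_iff_iff]
    exact forall_comm
  simp_rw [h]
  rw [← Finset.card_filter]
  have h2 : Finset.univ.filter
        (fun y : Fin t → Fin n => ∀ j, y j ∈ (Finset.univ : Finset (Fin n)).filter (fun w => ∀ i, r (x i) w))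
      = Fintype.piFinset (fun _ : Fin t => (Finset.univ : Finset (Fin n)).filter (fun w => ∀ i, r (x i) w)) := by
    ext y; simp [Fintype.mem_piFinset]
  rw [h2, Fintype.card_piFinset]
  simp

/-- double Jensen: key analytic inequality. -/
lemma key_ineq {m n : ℕ} (hm : 0 < m) (hn : 0 < n) {α : ℝ} (hα : 0 ≤ α)
    {s t : ℕ} (hs : 0 < s) (ht : 0 < t)
    (r : Fin m → Fin n → Prop) [∀ u w, Decidable (r u w)]
    (hE : (∑ w : Fin n, (((Finset.univ : Finset (Fin m)).filter fun u => r u w).card : ℝ)) = α * m * n) :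
    α ^ (s * t) * (m : ℝ) ^ s * (n : ℝ) ^ t
      ≤ ∑ x : Fin s → Fin m,
          (((Finset.univ : Finset (Fin n)).filter fun w => ∀ i, r (x i) w).card : ℝ) ^ t := by
  obtain ⟨a, rfl⟩ : ∃ a, s = a + 1 := ⟨s - 1, by omega⟩
  obtain ⟨b, rfl⟩ : ∃ b, t = b + 1 := ⟨t - 1, by omega⟩
  set d : Fin n → ℝ := fun w => (((Finset.univ : Finset (Fin m)).filter fun u => r u w).card : ℝ) with hd
  set c : (Fin (a+1) → Fin m) → ℝ :=
    fun x => (((Finset.univ : Finset (Fin n)).filter fun w => ∀ i, r (x i) w).card : ℝ) with hc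
  have hdnn : ∀ w ∈ Finset.univ, 0 ≤ d w := fun w _ => by positivity
  have hcnn : ∀ x ∈ Finset.univ, 0 ≤ c x := fun x _ => by positivity
  have h1 : (α * m * n) ^ (a+1) / (n:ℝ) ^ a ≤ ∑ w : Fin n, d w ^ (a+1) := by
    have := pow_sum_div_card_le_sum_pow (s := Finset.univ) (f := d) hdnn a
    simpa [hE] using this
  have h2 : ∑ x : Fin (a+1) → Fin m, c x = ∑ w : Fin n, d w ^ (a+1) := by
    have := sum_c_eq (s := a+1) r
    have := congrArg (fun k : ℕ => (k : ℝ)) this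
    push_cast at this
    simpa [hd, hc] using this
  have h3 : (∑ x : Fin (a+1) → Fin m, c x) ^ (b+1) / ((m:ℝ) ^ (a+1)) ^ b
      ≤ ∑ x : Fin (a+1) → Fin m, c x ^ (b+1) := by
    have := pow_sum_div_card_le_sum_pow (s := Finset.univ) (f := c) hcnn b
    simpa [Finset.card_univ] using this
  have hm' : (0:ℝ) < m := by exact_mod_cast hm
  have hn' : (0:ℝ) < n := by exact_mod_cast hn
  calc α ^ ((a+1) * (b+1)) * (m : ℝ) ^ (a+1) * (n : ℝ) ^ (b+1)
      = ((α * m * n) ^ (a+1) / (n:ℝ) ^ a) ^ (b+1) / ((m:ℝ) ^ (a+1)) ^ b := by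
        rw [div_pow, div_div, ← pow_mul]
        rw [eq_div_iff (by positivity)]
        ring
    _ ≤ (∑ x : Fin (a+1) → Fin m, c x) ^ (b+1) / ((m:ℝ) ^ (a+1)) ^ b := by
        have hbase : (α * ↑m * ↑n) ^ (a+1) / (n:ℝ) ^ a
            ≤ ∑ x : Fin (a+1) → Fin m, c x := by rw [h2]; exact h1
        have h0 : (0:ℝ) ≤ (α * ↑m * ↑n) ^ (a+1) / (n:ℝ) ^ a := by positivity
        gcongr
    _ ≤ _ := h3

/-- The tuple pairs inject into homomorphisms. -/
lemma subcount {V : Type*} [Fintype V] [DecidableEq V] (G : SimpleGraph V) [DecidableRel G.Adj]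
    {m n s t : ℕ} (f : Fin m → V) (g : Fin n → V)
    (hf : Function.Injective f) (hg : Function.Injective g)
    :
    ∑ x : Fin s → Fin m,
        (Finset.univ.filter fun w : Fin n => ∀ i, G.Adj (f (x i)) (g w)).card ^ t
      ≤ Nat.card (completeBipartiteGraph (Fin s) (Fin t) →g G) := by
  classical
  rw [← pair_count (fun u w => G.Adj (f u) (g w))]
  set T := {p : (Fin s → Fin m) × (Fin t → Fin n) // ∀ i j, G.Adj (f (p.1 i)) (g (p.2 j))}
  have hT : (Finset.univ.filter fun p : (Fin s → Fin m) × (Fin t → Fin n) =>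
        ∀ i j, G.Adj (f (p.1 i)) (g (p.2 j))).card = Nat.card T := by
    rw [Nat.card_eq_fintype_card, Fintype.card_subtype]
  rw [hT]
  have : Finite (completeBipartiteGraph (Fin s) (Fin t) →g G) :=
    Finite.of_injective (fun h => (h : Fin s ⊕ Fin t → V)) DFunLike.coe_injective
  refine Nat.card_le_card_of_injective
    (fun p => ⟨Sum.elim (fun i => f (p.1.1 i)) (fun j => g (p.1.2 j)), ?_⟩) ?_
  · intro x y hxy
    rcases x with i | i <;> rcases y with j | j <;>
      simp only [completeBipartiteGraph_adj] at hxy <;> simp_all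
    · exact p.2 i j
    · exact (p.2 j i).symm
  · intro p q hpq
    have hfun := congrArg (fun h : completeBipartiteGraph (Fin s) (Fin t) →g G =>
      (h : Fin s ⊕ Fin t → V)) hpq
    apply Subtype.ext
    apply Prod.ext
    · funext i
      have := congrFun hfun (Sum.inl i)
      simpa using hf this
    · funext j
      have := congrFun hfun (Sum.inr j)
      simpa using hg this

lemma zpow_helper {p q : ℝ} (hp : 0 < p) {a b : ℕ} (hab : a ≤ b) :
    p ^ (-((b - a : ℕ) : ℤ)) * (p * q) ^ b = p ^ a * q ^ b := by
  rw [zpow_neg, zpow_natCast, mul_pow]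
  have h : p ^ b = p ^ (b - a) * p ^ a := by rw [← pow_add]; congr 1; omega
  rw [h]
  have hne : p ^ (b - a) ≠ 0 := by positivity
  field_simp

/-- Lower bound on the number of homomorphisms from the complete bipartite
graph `K_{s,t}` to a bipartite graph `G` with parts of sizes `n₁, n₂` and
`α n₁ n₂` edges:
`hom(K_{s,t}, G) ≥ α^{st} · min{n₁,n₂}^{-|s-t|} · (n₁ n₂)^{max{s,t}}`. -/
theorem hom_count_lower_bound {n₁ n₂ : ℕ} {α : ℝ} (hα0 : 0 < α) (hα1 : α ≤ 1)
    (G : SimpleGraph (Fin n₁ ⊕ Fin n₂)) [DecidableRel G.Adj]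
    (hbip1 : ∀ a b : Fin n₁, ¬ G.Adj (Sum.inl a) (Sum.inl b))
    (hbip2 : ∀ a b : Fin n₂, ¬ G.Adj (Sum.inr a) (Sum.inr b))
    (hiso : ∀ v, ∃ w, G.Adj v w)
    (hE : (G.edgeFinset.card : ℝ) = α * n₁ * n₂)
    (s t : ℕ) (hs : 0 < s) (ht : 0 < t) :
    α ^ (s * t) * ((min n₁ n₂ : ℕ) : ℝ) ^ (-(|(s : ℤ) - (t : ℤ)|)) *
        ((n₁ * n₂ : ℕ) : ℝ) ^ (max s t) ≤
      (Nat.card (completeBipartiteGraph (Fin s) (Fin t) →g G) : ℝ) := by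
  classical
  -- degenerate case
  rcases Nat.eq_zero_or_pos (n₁ * n₂) with hdeg | hpos
  · have : ((n₁ * n₂ : ℕ) : ℝ) = 0 := by exact_mod_cast hdeg
    rw [this, zero_pow (by positivity : max s t ≠ 0), mul_zero]
    positivity
  have hn₁ : 0 < n₁ := Nat.pos_of_ne_zero (by rintro rfl; simp at hpos)
  have hn₂ : 0 < n₂ := Nat.pos_of_ne_zero (by rintro rfl; simp at hpos)
  -- edge double counting
  have degsum : ∀ v, G.degree v = ∑ w, if G.Adj v w then 1 else 0 := fun v => by
    rw [← SimpleGraph.card_neighborFinset_eq_degree, SimpleGraph.neighborFinset_eq_filter,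
      Finset.card_filter]
  have hdeg := SimpleGraph.sum_degrees_eq_twice_card_edges G
  simp only [degsum, Fintype.sum_sum_type, Finset.sum_add_distrib, hbip1, hbip2,
    if_false, Finset.sum_const_zero, zero_add, add_zero] at hdeg
  have swap : ∑ b : Fin n₂, ∑ a : Fin n₁, (if G.Adj (.inr b) (.inl a) then 1 else 0)
      = ∑ a : Fin n₁, ∑ b : Fin n₂, (if G.Adj (.inl a) (.inr b) then 1 else 0) := by
    rw [Finset.sum_comm]
    exact Finset.sum_congr rfl fun a _ => Finset.sum_congr rfl fun b _ =>
      if_congr (G.adj_comm _ _) rfl rfl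
  rw [swap] at hdeg
  have hE0 : ∑ a : Fin n₁, ∑ b : Fin n₂, (if G.Adj (.inl a) (.inr b) then 1 else 0)
      = G.edgeFinset.card := by omega
  -- the two edge-sum hypotheses
  have hE1 : (∑ w : Fin n₂,
      (((Finset.univ : Finset (Fin n₁)).filter fun u => G.Adj (.inl u) (.inr w)).card : ℝ))
      = α * n₁ * n₂ := by
    have h : ∑ w : Fin n₂,
        ((Finset.univ : Finset (Fin n₁)).filter fun u => G.Adj (.inl u) (.inr w)).card
        = G.edgeFinset.card := by
      simp_rw [Finset.card_filter]
      rw [Finset.sum_comm]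
      exact hE0
    have hE' := hE
    rw [← h] at hE'
    exact_mod_cast hE'
  have hE2 : (∑ w : Fin n₁,
      (((Finset.univ : Finset (Fin n₂)).filter fun u => G.Adj (.inr u) (.inl w)).card : ℝ))
      = α * n₂ * n₁ := by
    have h : ∑ w : Fin n₁,
        ((Finset.univ : Finset (Fin n₂)).filter fun u => G.Adj (.inr u) (.inl w)).card
        = G.edgeFinset.card := by
      simp_rw [Finset.card_filter]
      rw [← hE0]
      exact Finset.sum_congr rfl fun a _ => Finset.sum_congr rfl fun b _ =>
        if_congr (G.adj_comm _ _) rfl rfl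
    have hE' := hE
    rw [← h] at hE'
    rw [show α * (n₂:ℝ) * n₁ = α * n₁ * n₂ by ring]
    exact_mod_cast hE'
  -- the two bounds
  have bound1 : α ^ (s * t) * (n₁ : ℝ) ^ s * (n₂ : ℝ) ^ t
      ≤ (Nat.card (completeBipartiteGraph (Fin s) (Fin t) →g G) : ℝ) := by
    have k1 := key_ineq hn₁ hn₂ hα0.le hs ht
      (fun u w => G.Adj (Sum.inl u) (Sum.inr w)) hE1
    have k2 := subcount (s := s) (t := t) G Sum.inl Sum.inr
      Sum.inl_injective Sum.inr_injective
    exact k1.trans (by exact_mod_cast k2)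
  have bound2 : α ^ (s * t) * (n₂ : ℝ) ^ s * (n₁ : ℝ) ^ t
      ≤ (Nat.card (completeBipartiteGraph (Fin s) (Fin t) →g G) : ℝ) := by
    have k1 := key_ineq hn₂ hn₁ hα0.le hs ht
      (fun u w => G.Adj (Sum.inr u) (Sum.inl w)) hE2
    have k2 := subcount (s := s) (t := t) G Sum.inr Sum.inl
      Sum.inr_injective Sum.inl_injective
    exact k1.trans (by exact_mod_cast k2)
  have hp1 : (0:ℝ) < n₁ := by exact_mod_cast hn₁
  have hp2 : (0:ℝ) < n₂ := by exact_mod_cast hn₂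
  rcases le_total s t with hst | hst <;> rcases le_total n₁ n₂ with hn | hn
  · rw [show min n₁ n₂ = n₁ from min_eq_left hn, show max s t = t from max_eq_right hst,
      show -|(s:ℤ) - (t:ℤ)| = -(((t - s : ℕ)):ℤ) by
        rw [abs_of_nonpos (by omega : (s:ℤ) - (t:ℤ)  ≤ 0)]; push_cast; omega]
    push_cast
    rw [mul_assoc, zpow_helper hp1 hst]
    exact le_trans (le_of_eq (by ring)) bound1
  · rw [show min n₁ n₂ = n₂ from min_eq_right hn, show max s t = t from max_eq_right hst,
      show -|(s:ℤ) - (t:ℤ)| = -(((t - s : ℕ)):ℤ) by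
        rw [abs_of_nonpos (by omega : (s:ℤ) - (t:ℤ)  ≤ 0)]; push_cast; omega]
    push_cast
    rw [mul_comm (n₁:ℝ) (n₂:ℝ), mul_assoc, zpow_helper hp2 hst]
    exact le_trans (le_of_eq (by ring)) bound2
  · rw [show min n₁ n₂ = n₁ from min_eq_left hn, show max s t = s from max_eq_left hst,
      show -|(s:ℤ) - (t:ℤ)| = -(((s - t : ℕ)):ℤ) by
        rw [abs_of_nonneg (by omega : (0:ℤ) ≤ (s:ℤ) - (t:ℤ))]; push_cast; omega]
    push_cast
    rw [mul_assoc, zpow_helper hp1 hst]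
    exact le_trans (le_of_eq (by ring)) bound2
  · rw [show min n₁ n₂ = n₂ from min_eq_right hn, show max s t = s from max_eq_left hst,
      show -|(s:ℤ) - (t:ℤ)| = -(((s - t : ℕ)):ℤ) by
        rw [abs_of_nonneg (by omega : (0:ℤ) ≤ (s:ℤ) - (t:ℤ))]; push_cast; omega]
    push_cast
    rw [mul_comm (n₁:ℝ) (n₂:ℝ), mul_assoc, zpow_helper hp2 hst]
    exact le_trans (le_of_eq (by ring)) bound1
end
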